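/- arXiv:1505.05785 — 10 statements merged into one kernel-verified Lean document; each statement's English description precedes it below -/
import Mathlib

section
/- Let G be a finite connected simple graph with boundary B and injective boundary values u : B → ℝ as in the context. For every orientation σ of G compatible with u and every assignment 𝓔 : E → ℝ of a positive real energy to each edge, there exists a unique assignment c : E → ℝ of a positive real conductance to each edge such that some function h : V → ℝ extending u is c-harmonic at every interior vertex, satisfies h(x) > h(y) for every edge directed from x to y by σ, and satisfies c_e·(h(x) − h(y))² = 𝓔_e for every edge e = xy. -/
attribute [local instance] Classical.propDecidable

structure GraphOrientation {V : Type*} (G : SimpleGraph V) where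
  dir : V → V → Prop
  dir_adj : ∀ x y, dir x y → G.Adj x y
  dir_total : ∀ x y, G.Adj x y → (dir x y ↔ ¬ dir y x)

variable {V : Type*} [Fintype V] [DecidableEq V]

/-- σ is compatible with boundary values u. -/
def Compatible (G : SimpleGraph V) (B : Set V) (u : V → ℝ) (σ : GraphOrientation G) : Prop :=
  (∀ x, ¬ Relation.TransGen σ.dir x x) ∧
  (∀ x, x ∉ B → (∃ y, σ.dir x y) ∧ (∃ y, σ.dir y x)) ∧
  (∀ a ∈ B, ∀ b ∈ B, Relation.TransGen σ.dir a b → u b < u a)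

/-- B has ≥ 2 vertices and every edge lies on a simple path between distinct boundary vertices. -/
def BoundaryOK (G : SimpleGraph V) (B : Set V) : Prop :=
  2 ≤ B.ncard ∧ ∀ e ∈ G.edgeSet, ∃ a ∈ B, ∃ b ∈ B, a ≠ b ∧
    ∃ p : G.Walk a b, p.IsPath ∧ e ∈ p.edges

/-- h is c-harmonic at each interior vertex. -/
def Harmonic (G : SimpleGraph V) (B : Set V) (c : Sym2 V → ℝ) (h : V → ℝ) : Prop :=
  ∀ x, x ∉ B → ∑ y ∈ G.neighborFinset x, c s(x, y) * (h x - h y) = 0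

/-- the enharmonic (fixed-energy) equation at x. -/
def EnharmonicAt (G : SimpleGraph V) (𝓔 : Sym2 V → ℝ) (h : V → ℝ) (x : V) : Prop :=
  ∑ y ∈ G.neighborFinset x, 𝓔 s(x, y) / (h x - h y) = 0

/-- the polytope of functions extending u and strictly decreasing along σ. -/
def FuSigma (G : SimpleGraph V) (B : Set V) (u : V → ℝ) (σ : GraphOrientation G) : Set (V → ℝ) :=
  {h | (∀ b ∈ B, h b = u b) ∧ ∀ x y, σ.dir x y → h y < h x}

noncomputable def LogM (G : SimpleGraph V) (σ : GraphOrientation G) (𝓔 : Sym2 V → ℝ)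
    (h : V → ℝ) : ℝ :=
  ∑ p ∈ Finset.univ.filter (fun p : V × V => σ.dir p.1 p.2),
    𝓔 s(p.1, p.2) * Real.log (h p.1 - h p.2)

noncomputable def Mfun (G : SimpleGraph V) (𝓔 : Sym2 V → ℝ) (h : V → ℝ) : ℝ :=
  ∏ e ∈ G.edgeFinset,
    Sym2.lift ⟨fun x y => |h x - h y| ^ 𝓔 s(x, y),
      by intro x y; simp only []; rw [abs_sub_comm, Sym2.eq_swap]⟩ e

/-
With `c xy = 𝓔 xy / (h x - h y)²` forced by the energies, `c`-harmonicity of `h` becomes the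
enharmonic equation `∑_y 𝓔 xy / (h x - h y) = 0`: the critical-point equation of
`LogM h = ∑_{x → y} 𝓔 xy log (h x - h y)` on the polytope `FuSigma` of extensions of `u`
decreasing along `σ`. Compatibility makes the polytope nonempty and bounded, and `LogM` tends to
`-∞` at its boundary, so `LogM` has an interior maximum; this gives existence. For uniqueness,
subtracting the flux identities of two solutions `h₁, h₂` gives `∑ 𝓔 (Δw)² / (Δh₁ Δh₂) = 0` for
`w = h₂ - h₁`, so `w` is constant along `σ`, hence zero since every vertex flows to the boundary.
-/

open Filter Topology

section Relation

variable {α : Type*} {r : α → α → Prop}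

theorem Relation.ReflTransGen.rel_of_map_rel {β : Type*} {p : β → β → Prop} [Std.Refl p]
    [IsTrans β p] {f : α → β} (hf : ∀ x y, r x y → p (f x) (f y)) {x y : α}
    (hxy : Relation.ReflTransGen r x y) : p (f x) (f y) := by
  simpa only [Relation.reflTransGen_eq_self] using hxy.lift f hf

variable [Finite α]

theorem exists_reflTransGen_mem_of_acyclic (hr : ∀ x, ¬ Relation.TransGen r x x) {S : Set α}
    (hS : ∀ x ∉ S, ∃ y, r x y) (x : α) : ∃ b ∈ S, Relation.ReflTransGen r x b := by
  have : IsTrans α (Function.swap (Relation.TransGen r)) := ⟨fun _ _ _ h₁ h₂ => h₂.trans h₁⟩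
  have : Std.Irrefl (Function.swap (Relation.TransGen r)) := ⟨hr⟩
  induction x using
    (Finite.wellFounded_of_trans_of_irrefl (Function.swap (Relation.TransGen r))).induction with
  | _ x ih =>
  by_cases hx : x ∈ S
  · exact ⟨x, hx, .refl⟩
  · obtain ⟨y, hxy⟩ := hS x hx
    obtain ⟨b, hb, hyb⟩ := ih y (.single hxy)
    exact ⟨b, hb, .head hxy hyb⟩

theorem exists_nat_lt_of_acyclic (hr : ∀ x, ¬ Relation.TransGen r x x) :
    ∃ d : α → ℕ, ∀ x y, r x y → d y < d x := by
  refine ⟨fun x => {z | Relation.TransGen r x z}.ncard, fun x y hxy => Set.ncard_lt_ncard ?_⟩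
  exact Set.ssubset_iff_of_subset (fun z hz => .head hxy hz) |>.2 ⟨y, .single hxy, hr y⟩

end Relation

namespace GraphOrientation

variable {W : Type*} {G : SimpleGraph W} (σ : GraphOrientation G)

theorem dir_or_dir_of_adj {x y : W} (h : G.Adj x y) : σ.dir x y ∨ σ.dir y x := by
  have := σ.dir_total x y h
  tauto

theorem not_dir_of_dir {x y : W} (h : σ.dir x y) : ¬ σ.dir y x :=
  (σ.dir_total x y (σ.dir_adj x y h)).1 h

theorem sum_neighborFinset_eq_sum_dir [Fintype W] (g : W → W → ℝ) :
    ∑ x, ∑ y ∈ G.neighborFinset x, g x y =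
      ∑ p ∈ Finset.univ.filter (fun p : W × W => σ.dir p.1 p.2), (g p.1 p.2 + g p.2 p.1) := by
  have hsplit : ∀ x y, (if G.Adj x y then g x y else 0) =
      (if σ.dir x y then g x y else 0) + (if σ.dir y x then g x y else 0) := by
    intro x y
    by_cases hxy : G.Adj x y
    · rcases σ.dir_or_dir_of_adj hxy with h | h <;> simp [hxy, h, σ.not_dir_of_dir h]
    · have h₁ : ¬ σ.dir x y := fun h => hxy (σ.dir_adj x y h)
      have h₂ : ¬ σ.dir y x := fun h => hxy (σ.dir_adj y x h).symm
      simp [hxy, h₁, h₂]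
  calc ∑ x, ∑ y ∈ G.neighborFinset x, g x y
      = ∑ x, ∑ y, if G.Adj x y then g x y else 0 := by
        simp only [SimpleGraph.neighborFinset_eq_filter, Finset.sum_filter]
    _ = ∑ x, ∑ y, (if σ.dir x y then g x y else 0) +
          ∑ x, ∑ y, (if σ.dir y x then g x y else 0) := by
        simp only [hsplit, Finset.sum_add_distrib]
    _ = ∑ x, ∑ y, if σ.dir x y then g x y + g y x else 0 := by
        rw [Finset.sum_comm (f := fun x y => if σ.dir y x then g x y else 0),
          ← Finset.sum_add_distrib]
        simp only [← Finset.sum_add_distrib, ← ite_add_zero]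
    _ = _ := by rw [Finset.sum_filter, Fintype.sum_prod_type]

theorem sum_dir_mul_sub_div_eq [Fintype W] (𝓔 : Sym2 W → ℝ) (h w : W → ℝ) :
    ∑ p ∈ Finset.univ.filter (fun p : W × W => σ.dir p.1 p.2),
        𝓔 s(p.1, p.2) * (w p.1 - w p.2) / (h p.1 - h p.2) =
      ∑ x, w x * ∑ y ∈ G.neighborFinset x, 𝓔 s(x, y) / (h x - h y) := by
  simp_rw [Finset.mul_sum]
  rw [σ.sum_neighborFinset_eq_sum_dir]
  refine Finset.sum_congr rfl fun p _ => ?_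
  rw [Sym2.eq_swap (a := p.2), ← neg_sub (h p.1), div_neg]
  ring

end GraphOrientation

section Compatible

variable {W : Type*} [Fintype W] {G : SimpleGraph W} {B : Set W} {u : W → ℝ}
  {σ : GraphOrientation G}

theorem Compatible.exists_mem_reflTransGen_to (hσ : Compatible G B u σ) (x : W) :
    ∃ b ∈ B, Relation.ReflTransGen σ.dir x b :=
  exists_reflTransGen_mem_of_acyclic hσ.1 (fun x hx => (hσ.2.1 x hx).1) x

theorem Compatible.exists_mem_reflTransGen_from (hσ : Compatible G B u σ) (x : W) :
    ∃ a ∈ B, Relation.ReflTransGen σ.dir a x := by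
  simpa only [Relation.reflTransGen_swap] using
    exists_reflTransGen_mem_of_acyclic (r := Function.swap σ.dir)
      (fun x h => hσ.1 x (Relation.transGen_swap.1 h)) (fun x hx => (hσ.2.1 x hx).2) x

/-- `R x` is the largest boundary value reachable from `x` along `σ`. -/
theorem Compatible.exists_boundary_majorant (hσ : Compatible G B u σ) :
    ∃ R : W → ℝ, (∀ b ∈ B, R b = u b) ∧ (∀ x y, σ.dir x y → R y ≤ R x) ∧
      ∀ a ∈ B, ∀ y, σ.dir a y → R y < u a := by
  let S : W → Finset W := fun x =>
    Finset.univ.filter (fun b => b ∈ B ∧ Relation.ReflTransGen σ.dir x b)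
  have hS : ∀ x, (S x).Nonempty := fun x => by
    obtain ⟨b, hb, hxb⟩ := hσ.exists_mem_reflTransGen_to x
    exact ⟨b, by simp [S, hb, hxb]⟩
  refine ⟨fun x => (S x).sup' (hS x) u, fun b hb => le_antisymm ?_ ?_, fun x y hxy => ?_,
    fun a ha y hay => ?_⟩
  · refine Finset.sup'_le _ _ fun b' hb' => ?_
    simp only [S, Finset.mem_filter, Finset.mem_univ, true_and] at hb'
    rcases Relation.reflTransGen_iff_eq_or_transGen.1 hb'.2 with rfl | hbb'
    · exact le_rfl
    · exact (hσ.2.2 b hb b' hb'.1 hbb').le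
  · exact Finset.le_sup' u (Finset.mem_filter.2 ⟨Finset.mem_univ _, hb, .refl⟩)
  · refine Finset.sup'_mono u (fun b hb => ?_) (hS y)
    simp only [S, Finset.mem_filter, Finset.mem_univ, true_and] at hb ⊢
    exact ⟨hb.1, .head hxy hb.2⟩
  · refine (Finset.sup'_lt_iff _).2 fun b hb => ?_
    simp only [S, Finset.mem_filter, Finset.mem_univ, true_and] at hb
    exact hσ.2.2 a ha b hb.1 (.head' hay hb.2)

/-- Perturb the majorant `R` of `exists_boundary_majorant` in the interior by a small multiple of
a strictly decreasing height function. -/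
theorem Compatible.fuSigma_nonempty (hσ : Compatible G B u σ) : (FuSigma G B u σ).Nonempty := by
  obtain ⟨R, hRB, hRdir, hRlt⟩ := hσ.exists_boundary_majorant
  obtain ⟨d, hd⟩ := exists_nat_lt_of_acyclic hσ.1
  have hsmall : ∀ᶠ ε in 𝓝 (0 : ℝ), ∀ a y, a ∈ B → σ.dir a y → R y + ε * d y < u a := by
    refine eventually_all.2 fun a => eventually_all.2 fun y => ?_
    by_cases hay : a ∈ B ∧ σ.dir a y
    · have hlim : Tendsto (fun ε : ℝ => R y + ε * d y) (𝓝 0) (𝓝 (R y)) :=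
        (by fun_prop : Continuous fun ε : ℝ => R y + ε * d y).tendsto' 0 _ (by simp)
      exact (hlim.eventually_lt_const (hRlt a hay.1 y hay.2)).mono fun ε h _ _ => h
    · exact .of_forall fun ε ha hd => (hay ⟨ha, hd⟩).elim
  obtain ⟨ε, hε, hεpos⟩ :=
    ((hsmall.filter_mono nhdsWithin_le_nhds).and (self_mem_nhdsWithin (s := Set.Ioi 0))).exists
  refine ⟨fun x => if x ∈ B then u x else R x + ε * d x, fun b hb => if_pos hb,
    fun x y hxy => ?_⟩
  have hεd : ε * d y < ε * d x := mul_lt_mul_of_pos_left (by exact_mod_cast hd x y hxy) hεpos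
  have hεd₀ : 0 ≤ ε * d y := mul_nonneg (le_of_lt hεpos) (Nat.cast_nonneg _)
  have hR := hRdir x y hxy
  by_cases hx : x ∈ B <;> by_cases hy : y ∈ B <;> simp only [hx, hy, if_true, if_false]
  · exact hσ.2.2 x hx y hy (.single hxy)
  · exact hε x y hx hxy
  · linarith [hRB y hy]
  · linarith

theorem Compatible.norm_le_norm (hσ : Compatible G B u σ) {h : W → ℝ} (hB : ∀ b ∈ B, h b = u b)
    (hh : ∀ x y, σ.dir x y → h y ≤ h x) : ‖h‖ ≤ ‖u‖ := by
  refine (pi_norm_le_iff_of_nonneg (norm_nonneg u)).2 fun x => ?_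
  obtain ⟨b, hb, hxb⟩ := hσ.exists_mem_reflTransGen_to x
  obtain ⟨a, ha, hax⟩ := hσ.exists_mem_reflTransGen_from x
  have hbx := hxb.rel_of_map_rel (p := (· ≥ ·)) hh
  have hxa := hax.rel_of_map_rel (p := (· ≥ ·)) hh
  have hub := norm_le_pi_norm u b
  have hua := norm_le_pi_norm u a
  rw [Real.norm_eq_abs, abs_le] at *
  constructor <;> linarith [hB a ha, hB b hb]

theorem Compatible.isCompact_setOf_le_sub (hσ : Compatible G B u σ) {ε : ℝ} (hε : 0 ≤ ε) :
    IsCompact {h : W → ℝ | (∀ b ∈ B, h b = u b) ∧ ∀ x y, σ.dir x y → ε ≤ h x - h y} := by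
  have hclosed :
      IsClosed {h : W → ℝ | (∀ b ∈ B, h b = u b) ∧ ∀ x y, σ.dir x y → ε ≤ h x - h y} := by
    simp only [Set.ofPred_and, Set.ofPred_forall]
    exact .inter (isClosed_iInter fun b => isClosed_iInter fun _ =>
        isClosed_eq (continuous_apply b) continuous_const)
      (isClosed_iInter fun x => isClosed_iInter fun y => isClosed_iInter fun _ =>
        isClosed_le continuous_const ((continuous_apply x).sub (continuous_apply y)))
  refine (isCompact_closedBall (0 : W → ℝ) ‖u‖).of_isClosed_subset hclosed fun h hh => ?_
  exact mem_closedBall_zero_iff.2 (hσ.norm_le_norm hh.1 fun x y hxy => by linarith [hh.2 x y hxy])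

end Compatible

section LogM

variable {W : Type*} [Fintype W] {G : SimpleGraph W} {B : Set W} {u : W → ℝ}
  {σ : GraphOrientation G} {𝓔 : Sym2 W → ℝ}

theorem continuousAt_logM {h : W → ℝ} (hh : ∀ x y, σ.dir x y → h y < h x) :
    ContinuousAt (LogM G σ 𝓔) h := by
  refine tendsto_finsetSum _ fun p hp => ?_
  have hp : h p.2 < h p.1 := hh _ _ (Finset.mem_filter.1 hp).2
  exact continuousAt_const.mul
    (((continuous_apply p.1).sub (continuous_apply p.2)).continuousAt.log (sub_pos.2 hp).ne')

theorem logM_le_mul_log_add (h𝓔 : ∀ e ∈ G.edgeSet, 0 < 𝓔 e) {h : W → ℝ} {r : ℝ}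
    (hh : ∀ x y, σ.dir x y → h y < h x) (hr : ∀ x y, σ.dir x y → h x - h y ≤ r)
    {x y : W} (hxy : σ.dir x y) :
    LogM G σ 𝓔 h ≤ 𝓔 s(x, y) * Real.log (h x - h y) +
      ∑ p ∈ Finset.univ.filter (fun p : W × W => σ.dir p.1 p.2),
        𝓔 s(p.1, p.2) * max (Real.log r) 0 := by
  have hmem : (x, y) ∈ Finset.univ.filter (fun p : W × W => σ.dir p.1 p.2) := by simpa using hxy
  rw [LogM, ← Finset.add_sum_erase _ _ hmem]
  gcongr
  refine (Finset.sum_le_sum fun p hp => ?_).trans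
    (Finset.sum_le_sum_of_subset_of_nonneg (Finset.erase_subset _ _) fun p hp _ => ?_)
  · have hp := (Finset.mem_filter.1 (Finset.mem_of_mem_erase hp)).2
    gcongr
    · exact (h𝓔 _ (σ.dir_adj _ _ hp)).le
    · exact le_max_of_le_left (Real.log_le_log (sub_pos.2 (hh _ _ hp)) (hr _ _ hp))
  · exact mul_nonneg (h𝓔 _ (σ.dir_adj _ _ (Finset.mem_filter.1 hp).2)).le (le_max_right _ _)

theorem Compatible.exists_pos_forall_logM_lt (hσ : Compatible G B u σ)
    (h𝓔 : ∀ e ∈ G.edgeSet, 0 < 𝓔 e) (L : ℝ) :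
    ∃ ε > 0, ∀ h ∈ FuSigma G B u σ, ∀ x y, σ.dir x y → h x - h y < ε → LogM G σ 𝓔 h < L := by
  set C := ∑ p ∈ Finset.univ.filter (fun p : W × W => σ.dir p.1 p.2),
    𝓔 s(p.1, p.2) * max (Real.log (2 * ‖u‖)) 0
  have hev : ∀ᶠ ε in 𝓝[>] 0, ∀ x y, σ.dir x y → 𝓔 s(x, y) * Real.log ε + C < L := by
    refine eventually_all.2 fun x => eventually_all.2 fun y => ?_
    by_cases hxy : σ.dir x y
    · exact ((Real.tendsto_log_nhdsGT_zero.const_mul_atBot (h𝓔 _ (σ.dir_adj x y hxy))).atBot_add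
        tendsto_const_nhds |>.eventually_lt_atBot L).mono fun ε h _ => h
    · exact .of_forall fun ε h => (hxy h).elim
  obtain ⟨ε, hε, hεpos⟩ := (hev.and self_mem_nhdsWithin).exists
  refine ⟨ε, hεpos, fun h hh x y hxy hlt => ?_⟩
  have hdiff : ∀ x y, σ.dir x y → h x - h y ≤ 2 * ‖u‖ := by
    intro x y _
    have hnorm := hσ.norm_le_norm hh.1 fun x y hxy => (hh.2 x y hxy).le
    have hx := (norm_le_pi_norm h x).trans hnorm
    have hy := (norm_le_pi_norm h y).trans hnorm
    rw [Real.norm_eq_abs, abs_le] at hx hy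
    linarith
  calc LogM G σ 𝓔 h ≤ 𝓔 s(x, y) * Real.log (h x - h y) + C :=
        logM_le_mul_log_add h𝓔 hh.2 hdiff hxy
    _ ≤ 𝓔 s(x, y) * Real.log ε + C := by
        gcongr
        · exact (h𝓔 _ (σ.dir_adj x y hxy)).le
        · exact sub_pos.2 (hh.2 x y hxy)
    _ < L := hε x y hxy

theorem Compatible.exists_isMaxOn_logM (hσ : Compatible G B u σ)
    (h𝓔 : ∀ e ∈ G.edgeSet, 0 < 𝓔 e) :
    ∃ h₀ ∈ FuSigma G B u σ, IsMaxOn (LogM G σ 𝓔) (FuSigma G B u σ) h₀ := by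
  obtain ⟨h₁, hh₁⟩ := hσ.fuSigma_nonempty
  obtain ⟨ε, hε, hsmall⟩ := hσ.exists_pos_forall_logM_lt h𝓔 (LogM G σ 𝓔 h₁)
  set K := {h : W → ℝ | (∀ b ∈ B, h b = u b) ∧ ∀ x y, σ.dir x y → ε ≤ h x - h y}
  have hKF : K ⊆ FuSigma G B u σ := fun h hh =>
    ⟨hh.1, fun x y hxy => by linarith [hh.2 x y hxy]⟩
  have hFK : ∀ h ∈ FuSigma G B u σ, LogM G σ 𝓔 h₁ ≤ LogM G σ 𝓔 h → h ∈ K := fun h hh hle =>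
    ⟨hh.1, fun x y hxy => not_lt.1 fun hlt => (hsmall h hh x y hxy hlt).not_ge hle⟩
  obtain ⟨h₀, hh₀, hmax⟩ := (hσ.isCompact_setOf_le_sub hε.le).exists_isMaxOn
    ⟨h₁, hFK h₁ hh₁ le_rfl⟩ fun h hh => (continuousAt_logM (hKF hh).2).continuousWithinAt
  refine ⟨h₀, hKF hh₀, fun h hh => ?_⟩
  by_cases hle : LogM G σ 𝓔 h₁ ≤ LogM G σ 𝓔 h
  · exact hmax (hFK h hh hle)
  · exact (not_le.1 hle).le.trans (hmax (hFK h₁ hh₁ le_rfl))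

theorem hasDerivAt_logM_add_smul {h : W → ℝ} (hh : ∀ x y, σ.dir x y → h y < h x) (w : W → ℝ) :
    HasDerivAt (fun t : ℝ => LogM G σ 𝓔 (h + t • w))
      (∑ x, w x * ∑ y ∈ G.neighborFinset x, 𝓔 s(x, y) / (h x - h y)) 0 := by
  rw [← σ.sum_dir_mul_sub_div_eq]
  refine HasDerivAt.fun_sum fun p hp => ?_
  have hp : h p.2 < h p.1 := hh _ _ (Finset.mem_filter.1 hp).2
  have hline :
      HasDerivAt (fun t : ℝ => (h + t • w) p.1 - (h + t • w) p.2) (w p.1 - w p.2) 0 := by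
    simp only [Pi.add_apply, Pi.smul_apply, smul_eq_mul]
    exact ((hasDerivAt_mul_const _).const_add _).sub ((hasDerivAt_mul_const _).const_add _)
  exact ((hline.log (by simpa using (sub_pos.2 hp).ne')).const_mul (𝓔 s(p.1, p.2))).congr_deriv
    (by simp [mul_div_assoc])

theorem enharmonicAt_of_isMaxOn_logM {h₀ : W → ℝ} (hh₀ : h₀ ∈ FuSigma G B u σ)
    (hmax : IsMaxOn (LogM G σ 𝓔) (FuSigma G B u σ) h₀) {x : W} (hx : x ∉ B) :
    EnharmonicAt G 𝓔 h₀ x := by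
  set w : W → ℝ := Pi.single x 1
  have hline : ∀ᶠ t in 𝓝 (0 : ℝ), h₀ + t • w ∈ FuSigma G B u σ := by
    have hcont : Continuous fun t : ℝ => h₀ + t • w := by fun_prop
    refine (eventually_all.2 fun a => eventually_all.2 fun b => ?_).mono fun t ht =>
      ⟨fun b hb => ?_, ht⟩
    · by_cases hab : σ.dir a b
      · refine ((continuous_apply b).comp hcont |>.tendsto 0).eventually_lt
          ((continuous_apply a).comp hcont |>.tendsto 0) ?_ |>.mono fun t ht _ => ht
        simpa using hh₀.2 a b hab
      · exact .of_forall fun t h => (hab h).elim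
    · simp [w, ne_of_mem_of_not_mem hb hx, hh₀.1 b hb]
  have hloc : IsLocalMax (fun t : ℝ => LogM G σ 𝓔 (h₀ + t • w)) 0 :=
    hline.mono fun t ht => by simpa using hmax ht
  simpa [EnharmonicAt, w, Pi.single_apply] using
    hloc.hasDerivAt_eq_zero (hasDerivAt_logM_add_smul hh₀.2 w)

end LogM

section Conductance

noncomputable def conductanceOf {W : Type*} (𝓔 : Sym2 W → ℝ) (h : W → ℝ) : Sym2 W → ℝ :=
  Sym2.lift ⟨fun x y => 𝓔 s(x, y) / (h x - h y) ^ 2, fun x y => by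
    dsimp only
    rw [Sym2.eq_swap, ← neg_sub, neg_sq]⟩

variable {W : Type*} {G : SimpleGraph W} {B : Set W} {u : W → ℝ} {σ : GraphOrientation G}
  {𝓔 : Sym2 W → ℝ}

theorem sub_ne_zero_of_mem_fuSigma {h : W → ℝ} (hh : h ∈ FuSigma G B u σ) :
    ∀ x y, G.Adj x y → h x - h y ≠ 0 := by
  intro x y hxy
  rcases σ.dir_or_dir_of_adj hxy with hd | hd
  · exact (sub_pos.2 (hh.2 x y hd)).ne'
  · exact (sub_neg.2 (hh.2 y x hd)).ne

theorem sum_dir_mul_sub_div_eq_zero [Fintype W] {h w : W → ℝ}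
    (he : ∀ x ∉ B, EnharmonicAt G 𝓔 h x) (hw : ∀ b ∈ B, w b = 0) :
    ∑ p ∈ Finset.univ.filter (fun p : W × W => σ.dir p.1 p.2),
      𝓔 s(p.1, p.2) * (w p.1 - w p.2) / (h p.1 - h p.2) = 0 := by
  rw [σ.sum_dir_mul_sub_div_eq]
  refine Finset.sum_eq_zero fun x _ => ?_
  by_cases hx : x ∈ B
  · rw [hw x hx, zero_mul]
  · rw [he x hx, mul_zero]

theorem Compatible.eq_of_enharmonicAt [Fintype W] (hσ : Compatible G B u σ)
    (h𝓔 : ∀ e ∈ G.edgeSet, 0 < 𝓔 e) {h₁ h₂ : W → ℝ} (hh₁ : h₁ ∈ FuSigma G B u σ)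
    (hh₂ : h₂ ∈ FuSigma G B u σ) (he₁ : ∀ x ∉ B, EnharmonicAt G 𝓔 h₁ x)
    (he₂ : ∀ x ∉ B, EnharmonicAt G 𝓔 h₂ x) : h₁ = h₂ := by
  set P := Finset.univ.filter (fun p : W × W => σ.dir p.1 p.2)
  set w := h₂ - h₁
  have hwB : ∀ b ∈ B, w b = 0 := fun b hb => by simp [w, hh₁.1 b hb, hh₂.1 b hb]
  have hpos : ∀ p ∈ P, 0 < 𝓔 s(p.1, p.2) ∧ 0 < h₁ p.1 - h₁ p.2 ∧ 0 < h₂ p.1 - h₂ p.2 :=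
    fun p hp => have hp := (Finset.mem_filter.1 hp).2
      ⟨h𝓔 _ (σ.dir_adj _ _ hp), sub_pos.2 (hh₁.2 _ _ hp), sub_pos.2 (hh₂.2 _ _ hp)⟩
  -- the difference of the two flux identities is a sum of squares
  have hsq : ∑ p ∈ P, 𝓔 s(p.1, p.2) * (w p.1 - w p.2) ^ 2 /
      ((h₁ p.1 - h₁ p.2) * (h₂ p.1 - h₂ p.2)) = 0 := by
    calc _ = ∑ p ∈ P, (𝓔 s(p.1, p.2) * (w p.1 - w p.2) / (h₁ p.1 - h₁ p.2) -
          𝓔 s(p.1, p.2) * (w p.1 - w p.2) / (h₂ p.1 - h₂ p.2)) := by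
          refine Finset.sum_congr rfl fun p hp => ?_
          obtain ⟨-, hd₁, hd₂⟩ := hpos p hp
          simp only [w, Pi.sub_apply]
          field_simp
          ring
      _ = 0 := by
          rw [Finset.sum_sub_distrib, sum_dir_mul_sub_div_eq_zero he₁ hwB,
            sum_dir_mul_sub_div_eq_zero he₂ hwB, sub_zero]
  have hconst : ∀ x y, σ.dir x y → w x = w y := by
    intro x y hxy
    have hp : (x, y) ∈ P := by simpa [P] using hxy
    obtain ⟨h𝓔p, hd₁, hd₂⟩ := hpos _ hp
    have := (Finset.sum_eq_zero_iff_of_nonneg fun p hp => by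
      obtain ⟨h𝓔p, hd₁, hd₂⟩ := hpos p hp; positivity).1 hsq _ hp
    simpa [h𝓔p.ne', hd₁.ne', hd₂.ne', sub_eq_zero] using this
  funext x
  obtain ⟨b, hb, hxb⟩ := hσ.exists_mem_reflTransGen_to x
  have hwx : w x = 0 := (hxb.rel_of_map_rel hconst).trans (hwB b hb)
  simpa [w, sub_eq_zero, eq_comm] using hwx

theorem harmonic_iff_forall_enharmonicAt [Fintype W] {c : Sym2 W → ℝ} {h : W → ℝ}
    (hne : ∀ x y, G.Adj x y → h x - h y ≠ 0)
    (hc : ∀ x y, G.Adj x y → c s(x, y) * (h x - h y) ^ 2 = 𝓔 s(x, y)) :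
    Harmonic G B c h ↔ ∀ x ∉ B, EnharmonicAt G 𝓔 h x := by
  have hterm : ∀ x, ∀ y ∈ G.neighborFinset x,
      c s(x, y) * (h x - h y) = 𝓔 s(x, y) / (h x - h y) := by
    intro x y hy
    have hxy := (G.mem_neighborFinset x y).1 hy
    rw [← hc x y hxy, eq_div_iff (hne x y hxy)]
    ring
  simp only [Harmonic, EnharmonicAt, Finset.sum_congr rfl (hterm _)]

theorem conductanceOf_pos (h𝓔 : ∀ e ∈ G.edgeSet, 0 < 𝓔 e) {h : W → ℝ}
    (hne : ∀ x y, G.Adj x y → h x - h y ≠ 0) : ∀ e ∈ G.edgeSet, 0 < conductanceOf 𝓔 h e := by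
  intro e he
  induction e using Sym2.ind with
  | _ x y => exact div_pos (h𝓔 _ he) (sq_pos_of_ne_zero (hne x y he))

theorem conductanceOf_mul_sq {h : W → ℝ} (hne : ∀ x y, G.Adj x y → h x - h y ≠ 0) :
    ∀ x y, G.Adj x y → conductanceOf 𝓔 h s(x, y) * (h x - h y) ^ 2 = 𝓔 s(x, y) :=
  fun x y hxy => div_mul_cancel₀ _ (pow_ne_zero 2 (hne x y hxy))

theorem eq_conductanceOf {c : Sym2 W → ℝ} {h : W → ℝ} (hne : ∀ x y, G.Adj x y → h x - h y ≠ 0)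
    (hc : ∀ x y, G.Adj x y → c s(x, y) * (h x - h y) ^ 2 = 𝓔 s(x, y)) :
    ∀ e ∈ G.edgeSet, c e = conductanceOf 𝓔 h e := by
  intro e he
  induction e using Sym2.ind with
  | _ x y => exact (eq_div_iff (pow_ne_zero 2 (hne x y he))).2 (hc x y he)

end Conductance

theorem stmt_0_general (G : SimpleGraph V)
    (B : Set V) (u : V → ℝ)
    (σ : GraphOrientation G) (hσ : Compatible G B u σ)
    (𝓔 : Sym2 V → ℝ) (h𝓔 : ∀ e ∈ G.edgeSet, 0 < 𝓔 e) :
    ∃ c : Sym2 V → ℝ,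
      ((∀ e ∈ G.edgeSet, 0 < c e) ∧
        ∃ h : V → ℝ, (∀ b ∈ B, h b = u b) ∧ Harmonic G B c h ∧
          (∀ x y, σ.dir x y → h y < h x) ∧
          (∀ x y, G.Adj x y → c s(x, y) * (h x - h y) ^ 2 = 𝓔 s(x, y))) ∧
      ∀ c' : Sym2 V → ℝ,
        ((∀ e ∈ G.edgeSet, 0 < c' e) ∧
          ∃ h : V → ℝ, (∀ b ∈ B, h b = u b) ∧ Harmonic G B c' h ∧
            (∀ x y, σ.dir x y → h y < h x) ∧
            (∀ x y, G.Adj x y → c' s(x, y) * (h x - h y) ^ 2 = 𝓔 s(x, y))) →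
        ∀ e ∈ G.edgeSet, c' e = c e := by
  obtain ⟨h₀, hh₀, hmax⟩ := hσ.exists_isMaxOn_logM h𝓔
  have hne₀ := sub_ne_zero_of_mem_fuSigma hh₀
  have henergy₀ := conductanceOf_mul_sq (𝓔 := 𝓔) hne₀
  have henh₀ : ∀ x ∉ B, EnharmonicAt G 𝓔 h₀ x := fun x hx =>
    enharmonicAt_of_isMaxOn_logM hh₀ hmax hx
  refine ⟨conductanceOf 𝓔 h₀, ⟨conductanceOf_pos h𝓔 hne₀, h₀, hh₀.1,
    (harmonic_iff_forall_enharmonicAt hne₀ henergy₀).2 henh₀, hh₀.2, henergy₀⟩, ?_⟩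
  rintro c' ⟨-, h', hh'B, hharm', hh'dir, henergy'⟩
  have hh' : h' ∈ FuSigma G B u σ := ⟨hh'B, hh'dir⟩
  have hne' := sub_ne_zero_of_mem_fuSigma hh'
  obtain rfl : h' = h₀ := hσ.eq_of_enharmonicAt h𝓔 hh' hh₀
    ((harmonic_iff_forall_enharmonicAt hne' henergy').1 hharm') henh₀
  exact eq_conductanceOf hne' henergy'

/-- for each compatible orientation σ and positive energies 𝓔 there is a unique
choice of positive conductances whose harmonic extension of u realizes σ and the energies 𝓔. -/
theorem stmt_0 (G : SimpleGraph V) (hconn : G.Connected)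
    (B : Set V) (hB : BoundaryOK G B) (u : V → ℝ) (hu : Set.InjOn u B)
    (σ : GraphOrientation G) (hσ : Compatible G B u σ)
    (𝓔 : Sym2 V → ℝ) (h𝓔 : ∀ e ∈ G.edgeSet, 0 < 𝓔 e) :
    ∃ c : Sym2 V → ℝ,
      ((∀ e ∈ G.edgeSet, 0 < c e) ∧
        ∃ h : V → ℝ, (∀ b ∈ B, h b = u b) ∧ Harmonic G B c h ∧
          (∀ x y, σ.dir x y → h y < h x) ∧
          (∀ x y, G.Adj x y → c s(x, y) * (h x - h y) ^ 2 = 𝓔 s(x, y))) ∧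
      ∀ c' : Sym2 V → ℝ,
        ((∀ e ∈ G.edgeSet, 0 < c' e) ∧
          ∃ h : V → ℝ, (∀ b ∈ B, h b = u b) ∧ Harmonic G B c' h ∧
            (∀ x y, σ.dir x y → h y < h x) ∧
            (∀ x y, G.Adj x y → c' s(x, y) * (h x - h y) ^ 2 = 𝓔 s(x, y))) →
        ∀ e ∈ G.edgeSet, c' e = c e :=
  stmt_0_general G B u σ hσ 𝓔 h𝓔
end

section
/- Let G be a finite connected simple graph with boundary B and injective boundary values u : B → ℝ as in the context, let σ be an orientation of G compatible with u, and let 𝓔 : E → ℝ assign a positive real energy to each edge. If h ∈ F_u(σ) satisfies the enharmonic equation Σ_{y ∼ x} 𝓔_{xy}/(h(x) − h(y)) = 0 at every interior vertex x, then h is the unique maximizer over F_u(σ) of the functional M(h) = ∏_{e = xy ∈ E} |h(x) − h(y)|^{𝓔_e}; in particular F_u(σ) contains exactly one function satisfying the enharmonic equation at every interior vertex. -/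
attribute [local instance] Classical.propDecidable

variable {V : Type*} [Fintype V] [DecidableEq V]

/-!
`LogM` (the logarithm of `M` on `F_u(σ)`) is a strictly concave function of the edge
differences `h x - h y`. By the discrete Green identity, its derivative at `h` in a direction
`h' - h` vanishing on `B` is `∑ₓ (h' x - h x) ∑_{y ∼ x} 𝓔 s(x, y) / (h x - h y)`, which is zero
when `h` is enharmonic. The tangent-line bound for `log` then gives `LogM h' < LogM h` unless all
edge differences agree, which on a connected graph with `h' = h` on `B` forces `h' = h`.
Uniqueness follows by applying this to two enharmonic functions in both orders.
-/

open Finset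

namespace GraphOrientation

variable {G : SimpleGraph V} (σ : GraphOrientation G)

omit [Fintype V] [DecidableEq V] in
lemma not_dir_of_dir_s2 {x y : V} (hxy : σ.dir x y) : ¬ σ.dir y x :=
  (σ.dir_total x y (σ.dir_adj x y hxy)).mp hxy

omit [Fintype V] [DecidableEq V] in
lemma dir_or_dir {x y : V} (hxy : G.Adj x y) : σ.dir x y ∨ σ.dir y x := by
  by_contra! h
  exact h.1 ((σ.dir_total x y hxy).mpr h.2)

omit [DecidableEq V] in
/-- Discrete Green identity: each edge is one oriented pair on the left and two darts on the
right, and antisymmetry of `f` matches the two. -/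
theorem sum_dir_mul_sub (f : V → V → ℝ) (hf : ∀ x y, G.Adj x y → f y x = -f x y) (g : V → ℝ) :
    ∑ p ∈ univ.filter (fun p : V × V => σ.dir p.1 p.2), f p.1 p.2 * (g p.1 - g p.2)
      = ∑ x, g x * ∑ y ∈ G.neighborFinset x, f x y := by
  have hdart : ∀ x y, (if σ.dir x y then g x * f x y else 0)
      + (if σ.dir y x then g x * f x y else 0) = if G.Adj x y then g x * f x y else 0 := by
    intro x y
    by_cases hxy : G.Adj x y
    · rcases σ.dir_or_dir hxy with hd | hd <;> simp [hd, σ.not_dir_of_dir_s2 hd, hxy]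
    · have h₁ : ¬ σ.dir x y := fun hd => hxy (σ.dir_adj x y hd)
      have h₂ : ¬ σ.dir y x := fun hd => hxy (σ.dir_adj y x hd).symm
      simp [h₁, h₂, hxy]
  calc ∑ p ∈ univ.filter (fun p : V × V => σ.dir p.1 p.2), f p.1 p.2 * (g p.1 - g p.2)
      = ∑ x, ∑ y, ((if σ.dir x y then g x * f x y else 0)
          + (if σ.dir x y then g y * f y x else 0)) := by
        rw [sum_filter, Fintype.sum_prod_type]
        refine sum_congr rfl fun x _ => sum_congr rfl fun y _ => ?_
        split_ifs with hxy
        · rw [hf x y (σ.dir_adj x y hxy)]; ring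
        · simp
    _ = ∑ x, ∑ y, ((if σ.dir x y then g x * f x y else 0)
          + (if σ.dir y x then g x * f x y else 0)) := by
        simp only [sum_add_distrib]
        rw [sum_comm (f := fun x y => if σ.dir x y then g y * f y x else 0)]
    _ = ∑ x, g x * ∑ y ∈ G.neighborFinset x, f x y := by
        simp only [hdart, mul_sum, ← sum_filter, SimpleGraph.neighborFinset_eq_filter]

end GraphOrientation

omit [Fintype V] [DecidableEq V] in
lemma SimpleGraph.Preconnected.apply_eq_of_adj {G : SimpleGraph V} (hG : G.Preconnected)
    {α : Type*} {g : V → α} (hg : ∀ x y, G.Adj x y → g x = g y) (x y : V) : g x = g y := by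
  obtain ⟨w⟩ := hG x y
  induction w with
  | nil => rfl
  | cons hadj _ ih => exact (hg _ _ hadj).trans ih

namespace Real

lemma mul_log_le_tangent {E a b : ℝ} (hE : 0 ≤ E) (ha : 0 < a) (hb : 0 < b) :
    E * log b ≤ E * log a + E / a * (b - a) := by
  have hlog : log b - log a ≤ (b - a) / a := by
    rw [← log_div hb.ne' ha.ne', sub_div, div_self ha.ne']
    exact log_le_sub_one_of_pos (div_pos hb ha)
  have hweighted : E * (log b - log a) ≤ E * ((b - a) / a) := mul_le_mul_of_nonneg_left hlog hE
  linarith [show E / a * (b - a) = E * ((b - a) / a) by ring]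

lemma mul_log_lt_tangent {E a b : ℝ} (hE : 0 < E) (ha : 0 < a) (hb : 0 < b) (hne : b ≠ a) :
    E * log b < E * log a + E / a * (b - a) := by
  have hlog : log b - log a < (b - a) / a := by
    rw [← log_div hb.ne' ha.ne', sub_div, div_self ha.ne']
    exact log_lt_sub_one_of_pos (div_pos hb ha) (by rwa [Ne, div_eq_one_iff_eq ha.ne'])
  have hweighted : E * (log b - log a) < E * ((b - a) / a) := mul_lt_mul_of_pos_left hlog hE
  linarith [show E / a * (b - a) = E * ((b - a) / a) by ring]

end Real

section Energy

variable {G : SimpleGraph V} {B : Set V} {u : V → ℝ} {σ : GraphOrientation G}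
  {𝓔 : Sym2 V → ℝ} {h h' : V → ℝ}

omit [Fintype V] [DecidableEq V] in
lemma eq_of_mem_fuSigma_of_dir_sub_eq (hconn : G.Connected) (hB : B.Nonempty)
    (hmem : h ∈ FuSigma G B u σ) (hmem' : h' ∈ FuSigma G B u σ)
    (hdiff : ∀ x y, σ.dir x y → h' x - h' y = h x - h y) : h' = h := by
  have hconst : ∀ x y, h' x - h x = h' y - h y :=
    hconn.preconnected.apply_eq_of_adj fun x y hxy => by
      rcases σ.dir_or_dir hxy with hd | hd
      · linarith [hdiff x y hd]
      · linarith [hdiff y x hd]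
  obtain ⟨b, hb⟩ := hB
  funext x
  linarith [hconst x b, hmem.1 b hb, hmem'.1 b hb]

omit [DecidableEq V] in
lemma sum_dir_div_mul_sub_eq_zero (hmem : h ∈ FuSigma G B u σ)
    (henh : ∀ x, x ∉ B → EnharmonicAt G 𝓔 h x) (hmem' : h' ∈ FuSigma G B u σ) :
    ∑ p ∈ univ.filter (fun p : V × V => σ.dir p.1 p.2),
      𝓔 s(p.1, p.2) / (h p.1 - h p.2) * ((h' p.1 - h' p.2) - (h p.1 - h p.2)) = 0 := by
  have hgreen := σ.sum_dir_mul_sub (fun x y => 𝓔 s(x, y) / (h x - h y))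
    (fun x y _ => by rw [Sym2.eq_swap, ← neg_sub, div_neg]) (h' - h)
  simp only [Pi.sub_apply] at hgreen
  refine (sum_congr rfl fun p _ => ?_).trans (hgreen.trans (sum_eq_zero fun x _ => ?_))
  · ring
  by_cases hx : x ∈ B
  · rw [hmem.1 x hx, hmem'.1 x hx, sub_self, zero_mul]
  · rw [show _ = (0 : ℝ) from henh x hx, mul_zero]

omit [DecidableEq V] in
lemma logM_lt_of_enharmonic (hconn : G.Connected) (hB : B.Nonempty)
    (h𝓔 : ∀ e ∈ G.edgeSet, 0 < 𝓔 e) (hmem : h ∈ FuSigma G B u σ)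
    (henh : ∀ x, x ∉ B → EnharmonicAt G 𝓔 h x) (hmem' : h' ∈ FuSigma G B u σ) (hne : h' ≠ h) :
    LogM G σ 𝓔 h' < LogM G σ 𝓔 h := by
  set D := univ.filter (fun p : V × V => σ.dir p.1 p.2)
  have hpos : ∀ p ∈ D, 0 < 𝓔 s(p.1, p.2) ∧ 0 < h p.1 - h p.2 ∧ 0 < h' p.1 - h' p.2 := by
    intro p hp
    have hd : σ.dir p.1 p.2 := (mem_filter.mp hp).2
    exact ⟨h𝓔 _ (σ.dir_adj _ _ hd), sub_pos.mpr (hmem.2 _ _ hd), sub_pos.mpr (hmem'.2 _ _ hd)⟩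
  obtain ⟨q, hqD, hq⟩ : ∃ q ∈ D, h' q.1 - h' q.2 ≠ h q.1 - h q.2 := by
    by_contra! hall
    exact hne (eq_of_mem_fuSigma_of_dir_sub_eq hconn hB hmem hmem'
      fun x y hxy => hall (x, y) (mem_filter.mpr ⟨mem_univ _, hxy⟩))
  calc LogM G σ 𝓔 h' = ∑ p ∈ D, 𝓔 s(p.1, p.2) * Real.log (h' p.1 - h' p.2) := rfl
    _ < ∑ p ∈ D, (𝓔 s(p.1, p.2) * Real.log (h p.1 - h p.2)
          + 𝓔 s(p.1, p.2) / (h p.1 - h p.2) * ((h' p.1 - h' p.2) - (h p.1 - h p.2))) := by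
        refine sum_lt_sum (fun p hp => ?_) ⟨q, hqD, ?_⟩
        · obtain ⟨hE, hd, hd'⟩ := hpos p hp
          exact Real.mul_log_le_tangent hE.le hd hd'
        · obtain ⟨hE, hd, hd'⟩ := hpos q hqD
          exact Real.mul_log_lt_tangent hE hd hd' hq
    _ = LogM G σ 𝓔 h := by
        rw [sum_add_distrib, sum_dir_div_mul_sub_eq_zero hmem henh hmem', add_zero, LogM]

omit [DecidableEq V] in
lemma mfun_eq_exp_logM (hmem : h ∈ FuSigma G B u σ) :
    Mfun G 𝓔 h = Real.exp (LogM G σ 𝓔 h) := by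
  rw [Mfun, LogM, Real.exp_sum]
  refine (prod_bij (fun (p : V × V) _ => s(p.1, p.2)) ?_ ?_ ?_ ?_).symm
  · intro p hp
    exact SimpleGraph.mem_edgeFinset.mpr (σ.dir_adj _ _ (mem_filter.mp hp).2)
  · intro p hp q hq hpq
    rcases Sym2.eq_iff.mp hpq with ⟨h₁, h₂⟩ | ⟨h₁, h₂⟩
    · exact Prod.ext h₁ h₂
    · have hdp := (mem_filter.mp hp).2
      rw [h₁, h₂] at hdp
      exact absurd hdp (σ.not_dir_of_dir_s2 (mem_filter.mp hq).2)
  · intro e he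
    induction e with
    | _ x y =>
      rcases σ.dir_or_dir (SimpleGraph.mem_edgeFinset.mp he) with hd | hd
      · exact ⟨(x, y), mem_filter.mpr ⟨mem_univ _, hd⟩, rfl⟩
      · exact ⟨(y, x), mem_filter.mpr ⟨mem_univ _, hd⟩, Sym2.eq_swap⟩
  · intro p hp
    have hd : 0 < h p.1 - h p.2 := sub_pos.mpr (hmem.2 _ _ (mem_filter.mp hp).2)
    rw [Sym2.lift_mk]
    dsimp only
    rw [abs_of_pos hd, Real.rpow_def_of_pos hd, mul_comm]

end Energy

theorem stmt_2_general (G : SimpleGraph V) (hconn : G.Connected)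
    (B : Set V) (hB : BoundaryOK G B) (u : V → ℝ)
    (σ : GraphOrientation G)
    (𝓔 : Sym2 V → ℝ) (h𝓔 : ∀ e ∈ G.edgeSet, 0 < 𝓔 e)
    (h : V → ℝ) (hmem : h ∈ FuSigma G B u σ)
    (henh : ∀ x, x ∉ B → EnharmonicAt G 𝓔 h x) :
    (∀ h' ∈ FuSigma G B u σ, h' ≠ h → Mfun G 𝓔 h' < Mfun G 𝓔 h) ∧
    (∀ h' ∈ FuSigma G B u σ, (∀ x, x ∉ B → EnharmonicAt G 𝓔 h' x) → h' = h) := by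
  have hBne : B.Nonempty := Set.nonempty_of_ncard_ne_zero (by have := hB.1; omega)
  refine ⟨fun h' hmem' hne => ?_, fun h' hmem' henh' => ?_⟩
  · rw [mfun_eq_exp_logM hmem', mfun_eq_exp_logM hmem, Real.exp_lt_exp]
    exact logM_lt_of_enharmonic hconn hBne h𝓔 hmem henh hmem' hne
  · by_contra hne
    exact lt_asymm (logM_lt_of_enharmonic hconn hBne h𝓔 hmem henh hmem' hne)
      (logM_lt_of_enharmonic hconn hBne h𝓔 hmem' henh' hmem (Ne.symm hne))

/-- a function in F_u(σ) satisfying the enharmonic equation at all interior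
vertices is the unique maximizer of M over F_u(σ); in particular it is the only such function. -/
theorem stmt_2 (G : SimpleGraph V) (hconn : G.Connected)
    (B : Set V) (hB : BoundaryOK G B) (u : V → ℝ) (hu : Set.InjOn u B)
    (σ : GraphOrientation G) (hσ : Compatible G B u σ)
    (𝓔 : Sym2 V → ℝ) (h𝓔 : ∀ e ∈ G.edgeSet, 0 < 𝓔 e)
    (h : V → ℝ) (hmem : h ∈ FuSigma G B u σ)
    (henh : ∀ x, x ∉ B → EnharmonicAt G 𝓔 h x) :
    (∀ h' ∈ FuSigma G B u σ, h' ≠ h → Mfun G 𝓔 h' < Mfun G 𝓔 h) ∧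
    (∀ h' ∈ FuSigma G B u σ, (∀ x, x ∉ B → EnharmonicAt G 𝓔 h' x) → h' = h) :=
  stmt_2_general G hconn B hB u σ 𝓔 h𝓔 h hmem henh
end

section
/- Let G be a finite connected simple graph with boundary B and injective boundary values u : B → ℝ as in the context, let σ be an acyclic orientation of G, and let 𝓔 : E → ℝ assign a positive real energy to each edge. Then the function h ↦ Σ_{e} 𝓔_e · log(h(x_e) − h(y_e)), where the sum is over edges e directed from x_e to y_e by σ, is strictly concave on the convex set F_u(σ): for any two distinct h₁, h₂ ∈ F_u(σ) and any t ∈ (0,1), its value at t·h₁ + (1−t)·h₂ is strictly greater than t times its value at h₁ plus (1−t) times its value at h₂. -/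
attribute [local instance] Classical.propDecidable

variable {V : Type*} [Fintype V] [DecidableEq V]

/-!
Each summand `𝓔 e * log (h x_e - h y_e)` is a concave function of `h`, being the composition of
the strictly concave `log` with a linear map, so the sum is concave; strictness needs one edge on
which the two differences `h₁ x - h₁ y` and `h₂ x - h₂ y` differ. If there were none, `h₁ - h₂`
would be constant across every edge, hence constant on the connected graph, hence zero because it
vanishes on the (nonempty) boundary.
-/

theorem SimpleGraph.Preconnected.apply_eq_of_forall_adj {W α : Type*} {G : SimpleGraph W}
    (hG : G.Preconnected) {f : W → α} (hf : ∀ x y, G.Adj x y → f x = f y) (x y : W) :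
    f x = f y := by
  obtain ⟨w⟩ := hG x y
  induction w with
  | nil => rfl
  | cons hadj _ ih => exact (hf _ _ hadj).trans ih

theorem GraphOrientation.dir_or_dir_s3 {W : Type*} {G : SimpleGraph W} (σ : GraphOrientation G)
    {x y : W} (hadj : G.Adj x y) : σ.dir x y ∨ σ.dir y x := by
  by_contra! h
  exact h.1 ((σ.dir_total x y hadj).2 h.2)

theorem exists_dir_sub_ne_of_ne {W : Type*} [Fintype W] {G : SimpleGraph W}
    (hG : G.Preconnected) {B : Set W} (hB : B.Nonempty) {u : W → ℝ} {σ : GraphOrientation G}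
    {h₁ h₂ : W → ℝ} (hm₁ : h₁ ∈ FuSigma G B u σ) (hm₂ : h₂ ∈ FuSigma G B u σ) (hne : h₁ ≠ h₂) :
    ∃ x y, σ.dir x y ∧ h₁ x - h₁ y ≠ h₂ x - h₂ y := by
  by_contra! hsame
  have hadj : ∀ x y, G.Adj x y → (h₁ - h₂) x = (h₁ - h₂) y := by
    intro x y hxy
    rcases σ.dir_or_dir_s3 hxy with hd | hd
    · have := hsame x y hd
      simp only [Pi.sub_apply]; linarith
    · have := hsame y x hd
      simp only [Pi.sub_apply]; linarith
  obtain ⟨b, hb⟩ := hB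
  refine hne (funext fun v => sub_eq_zero.1 ?_)
  rw [← Pi.sub_apply, hG.apply_eq_of_forall_adj hadj v b, Pi.sub_apply, hm₁.1 b hb,
    hm₂.1 b hb, sub_self]

theorem mul_log_combo_le {c a b t : ℝ} (hc : 0 ≤ c) (ha : 0 < a) (hb : 0 < b) (ht0 : 0 ≤ t)
    (ht1 : t ≤ 1) :
    t * (c * Real.log a) + (1 - t) * (c * Real.log b) ≤ c * Real.log (t * a + (1 - t) * b) := by
  have := strictConcaveOn_log_Ioi.concaveOn.2 (Set.mem_Ioi.2 ha) (Set.mem_Ioi.2 hb) ht0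
    (sub_nonneg.2 ht1) (add_sub_cancel t 1)
  simp only [smul_eq_mul] at this
  nlinarith

theorem mul_log_combo_lt {c a b t : ℝ} (hc : 0 < c) (ha : 0 < a) (hb : 0 < b) (hab : a ≠ b)
    (ht0 : 0 < t) (ht1 : t < 1) :
    t * (c * Real.log a) + (1 - t) * (c * Real.log b) < c * Real.log (t * a + (1 - t) * b) := by
  have := strictConcaveOn_log_Ioi.2 (Set.mem_Ioi.2 ha) (Set.mem_Ioi.2 hb) hab ht0
    (sub_pos.2 ht1) (add_sub_cancel t 1)
  simp only [smul_eq_mul] at this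
  nlinarith

theorem stmt_3_general (G : SimpleGraph V) (hconn : G.Connected)
    (B : Set V) (hB : BoundaryOK G B) (u : V → ℝ)
    (σ : GraphOrientation G)
    (𝓔 : Sym2 V → ℝ) (h𝓔 : ∀ e ∈ G.edgeSet, 0 < 𝓔 e)
    (h₁ h₂ : V → ℝ) (hm₁ : h₁ ∈ FuSigma G B u σ) (hm₂ : h₂ ∈ FuSigma G B u σ)
    (hne : h₁ ≠ h₂) (t : ℝ) (ht0 : 0 < t) (ht1 : t < 1) :
    t * LogM G σ 𝓔 h₁ + (1 - t) * LogM G σ 𝓔 h₂ <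
      LogM G σ 𝓔 (fun v => t * h₁ v + (1 - t) * h₂ v) := by
  have hBne : B.Nonempty := Set.nonempty_of_ncard_ne_zero (by linarith [hB.1])
  obtain ⟨x₀, y₀, hd₀, hne₀⟩ :=
    exists_dir_sub_ne_of_ne hconn.preconnected hBne hm₁ hm₂ hne
  have hcombo (x y : V) : (t * h₁ x + (1 - t) * h₂ x) - (t * h₁ y + (1 - t) * h₂ y) =
      t * (h₁ x - h₁ y) + (1 - t) * (h₂ x - h₂ y) := by ring
  have hpos (p : V × V) (hp : σ.dir p.1 p.2) :
      0 < 𝓔 s(p.1, p.2) ∧ 0 < h₁ p.1 - h₁ p.2 ∧ 0 < h₂ p.1 - h₂ p.2 :=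
    ⟨h𝓔 _ (σ.dir_adj _ _ hp), sub_pos.2 (hm₁.2 _ _ hp), sub_pos.2 (hm₂.2 _ _ hp)⟩
  rw [LogM, LogM, LogM, Finset.mul_sum, Finset.mul_sum, ← Finset.sum_add_distrib]
  refine Finset.sum_lt_sum (fun p hp => ?_) ⟨(x₀, y₀), by simpa using hd₀, ?_⟩
  · obtain ⟨hc, ha, hb⟩ := hpos p (Finset.mem_filter.1 hp).2
    rw [hcombo]
    exact mul_log_combo_le hc.le ha hb ht0.le ht1.le
  · obtain ⟨hc, ha, hb⟩ := hpos (x₀, y₀) hd₀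
    rw [hcombo]
    exact mul_log_combo_lt hc ha hb hne₀ ht0 ht1

/-- for an acyclic orientation σ and positive energies, the functional
h ↦ Σ_e 𝓔_e log(h x_e − h y_e) is strictly concave on the convex set F_u(σ). -/
theorem stmt_3 (G : SimpleGraph V) (hconn : G.Connected)
    (B : Set V) (hB : BoundaryOK G B) (u : V → ℝ) (hu : Set.InjOn u B)
    (σ : GraphOrientation G) (hacyc : ∀ x, ¬ Relation.TransGen σ.dir x x)
    (𝓔 : Sym2 V → ℝ) (h𝓔 : ∀ e ∈ G.edgeSet, 0 < 𝓔 e)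
    (h₁ h₂ : V → ℝ) (hm₁ : h₁ ∈ FuSigma G B u σ) (hm₂ : h₂ ∈ FuSigma G B u σ)
    (hne : h₁ ≠ h₂) (t : ℝ) (ht0 : 0 < t) (ht1 : t < 1) :
    t * LogM G σ 𝓔 h₁ + (1 - t) * LogM G σ 𝓔 h₂ <
      LogM G σ 𝓔 (fun v => t * h₁ v + (1 - t) * h₂ v) :=
  stmt_3_general G hconn B hB u σ 𝓔 h𝓔 h₁ h₂ hm₁ hm₂ hne t ht0 ht1
end

section
/- Let G be a finite connected simple graph with boundary B and injective boundary values u : B → ℝ as in the context, and let 𝓔 : E → ℝ assign a positive real energy to each edge. Suppose h : V → ℂ satisfies h(b) = u(b) for every boundary vertex b, h(x) ≠ h(y) for every edge xy, and Σ_{y ∼ x} 𝓔_{xy}/(h(x) − h(y)) = 0 at every interior vertex x. Then h(v) is real for every vertex v, and for every edge e = xy the number c_e := 𝓔_e/(h(x) − h(y))² is a positive real number. -/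
attribute [local instance] Classical.propDecidable

variable {V : Type*} [Fintype V] [DecidableEq V]

/-
The imaginary part of the enharmonic equation at an interior vertex x reads
Σ_y c_xy (Im h x − Im h y) = 0 with c_xy = 𝓔_xy / |h x − h y|² > 0, because
Im(r / z) = −r Im z / |z|² for real r. So Im h is harmonic for positive conductances and
vanishes on the boundary, hence vanishes everywhere by the maximum principle on the connected
graph. Once h is real, 𝓔_e / (h x − h y)² is a positive real number because h x ≠ h y.
-/
namespace SimpleGraph

section MaximumPrinciple

variable {W : Type*} [Fintype W] {G : SimpleGraph W} {B : Set W} {c : W → W → ℝ} {g : W → ℝ}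

noncomputable def weightedLaplacian (G : SimpleGraph W) (c : W → W → ℝ) (g : W → ℝ) (x : W) : ℝ :=
  ∑ y ∈ G.neighborFinset x, c x y * (g x - g y)

theorem eq_of_weightedLaplacian_eq_zero_of_forall_le {x y : W} (hc : ∀ z, G.Adj x z → 0 < c x z)
    (hx : weightedLaplacian G c g x = 0) (hmax : ∀ z, G.Adj x z → g z ≤ g x) (hxy : G.Adj x y) :
    g y = g x := by
  have hterm : ∀ z ∈ G.neighborFinset x, 0 ≤ c x z * (g x - g z) := fun z hz =>
    have hz := (G.mem_neighborFinset x z).mp hz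
    mul_nonneg (hc z hz).le (sub_nonneg.mpr (hmax z hz))
  have hy := (Finset.sum_eq_zero_iff_of_nonneg hterm).mp hx y ((G.mem_neighborFinset x y).mpr hxy)
  have := (mul_eq_zero.mp hy).resolve_left (hc y hxy).ne'
  linarith

theorem exists_mem_eq_max_of_walk {a : W} (hc : ∀ x y, G.Adj x y → 0 < c x y)
    (hharm : ∀ x ∉ B, weightedLaplacian G c g x = 0) (hmax : ∀ z, g z ≤ g a) :
    ∀ {x b : W}, G.Walk x b → b ∈ B → g x = g a → ∃ v ∈ B, g v = g a
  | _, _, .nil, hb, hxa => ⟨_, hb, hxa⟩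
  | x, _, .cons hxy p, hb, hxa => by
    by_cases hx : x ∈ B
    · exact ⟨x, hx, hxa⟩
    refine exists_mem_eq_max_of_walk hc hharm hmax p hb ?_
    rw [← hxa]
    exact eq_of_weightedLaplacian_eq_zero_of_forall_le (hc x) (hharm x hx)
      (fun z _ => hxa ▸ hmax z) hxy

theorem Connected.le_zero_of_weightedLaplacian_eq_zero (hG : G.Connected) (hB : B.Nonempty)
    (hc : ∀ x y, G.Adj x y → 0 < c x y) (hharm : ∀ x ∉ B, weightedLaplacian G c g x = 0)
    (hgB : ∀ b ∈ B, g b = 0) (v : W) : g v ≤ 0 := by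
  obtain ⟨a, -, ha⟩ := Finset.exists_max_image Finset.univ g ⟨v, Finset.mem_univ v⟩
  have hmax : ∀ z, g z ≤ g a := fun z => ha z (Finset.mem_univ z)
  obtain ⟨b, hb⟩ := hB
  obtain ⟨w, hwB, hw⟩ := exists_mem_eq_max_of_walk hc hharm hmax (hG.preconnected a b).some hb rfl
  linarith [hmax v, hgB w hwB]

theorem weightedLaplacian_neg (x : W) :
    weightedLaplacian G c (-g) x = -weightedLaplacian G c g x := by
  rw [weightedLaplacian, weightedLaplacian, ← Finset.sum_neg_distrib]
  exact Finset.sum_congr rfl fun y _ => by simp only [Pi.neg_apply]; ring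

theorem Connected.eq_zero_of_weightedLaplacian_eq_zero (hG : G.Connected) (hB : B.Nonempty)
    (hc : ∀ x y, G.Adj x y → 0 < c x y) (hharm : ∀ x ∉ B, weightedLaplacian G c g x = 0)
    (hgB : ∀ b ∈ B, g b = 0) (v : W) : g v = 0 := by
  have hneg : ∀ x ∉ B, weightedLaplacian G c (-g) x = 0 := fun x hx => by
    rw [weightedLaplacian_neg, hharm x hx, neg_zero]
  exact le_antisymm (hG.le_zero_of_weightedLaplacian_eq_zero hB hc hharm hgB v)
    (neg_nonpos.mp (hG.le_zero_of_weightedLaplacian_eq_zero hB hc hneg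
      (fun b hb => by simp [hgB b hb]) v))

end MaximumPrinciple

end SimpleGraph

theorem Complex.im_ofReal_div (r : ℝ) (z : ℂ) : ((r : ℂ) / z).im = -(r / normSq z) * z.im := by
  rw [div_eq_mul_inv, im_ofReal_mul, inv_im]
  ring

theorem Complex.ofReal_div_sq_of_im_eq_zero {z : ℂ} (hz : z.im = 0) (r : ℝ) :
    (r : ℂ) / z ^ 2 = ((r / z.re ^ 2 : ℝ) : ℂ) := by
  conv_lhs => rw [← Complex.re_add_im z, hz]
  push_cast
  ring

theorem stmt_4_general (G : SimpleGraph V) (hconn : G.Connected)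
    (B : Set V) (hB : BoundaryOK G B) (u : V → ℝ)
    (𝓔 : Sym2 V → ℝ) (h𝓔 : ∀ e ∈ G.edgeSet, 0 < 𝓔 e)
    (h : V → ℂ) (hbd : ∀ b ∈ B, h b = (u b : ℂ))
    (hne : ∀ x y, G.Adj x y → h x ≠ h y)
    (henh : ∀ x, x ∉ B → ∑ y ∈ G.neighborFinset x, (𝓔 s(x, y) : ℂ) / (h x - h y) = 0) :
    (∀ v , (h v).im = 0) ∧
    ∀ x y, G.Adj x y →
      ((𝓔 s(x, y) : ℂ) / (h x - h y) ^ 2).im = 0 ∧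
      0 < ((𝓔 s(x, y) : ℂ) / (h x - h y) ^ 2).re := by
  set c : V → V → ℝ := fun x y => 𝓔 s(x, y) / Complex.normSq (h x - h y)
  have hc : ∀ x y, G.Adj x y → 0 < c x y := fun x y hxy =>
    div_pos (h𝓔 _ hxy) (Complex.normSq_pos.mpr (sub_ne_zero.mpr (hne x y hxy)))
  have hharm : ∀ x ∉ B, G.weightedLaplacian c (fun v => (h v).im) x = 0 := fun x hx => by
    have := congrArg Complex.im (henh x hx)
    simpa [Complex.im_sum, Complex.im_ofReal_div, SimpleGraph.weightedLaplacian, c,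
      Finset.sum_neg_distrib] using this
  have hBne : B.Nonempty := Set.nonempty_of_ncard_ne_zero (by have := hB.1; omega)
  have him : ∀ v, (h v).im = 0 :=
    hconn.eq_zero_of_weightedLaplacian_eq_zero hBne hc hharm (fun b hb => by simp [hbd b hb])
  refine ⟨him, fun x y hxy => ?_⟩
  have hsub_im : (h x - h y).im = 0 := by simp [him]
  have hsub_re : (h x - h y).re ≠ 0 := fun h0 =>
    hne x y hxy (sub_eq_zero.mp (Complex.ext h0 hsub_im))
  rw [Complex.ofReal_div_sq_of_im_eq_zero hsub_im]
  exact ⟨Complex.ofReal_im _, div_pos (h𝓔 _ hxy) (sq_pos_of_ne_zero hsub_re)⟩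

/-- any complex solution of the enharmonic equations with real boundary values is
real, and the associated conductances 𝓔_e/(h x − h y)² are positive reals. -/
theorem stmt_4 (G : SimpleGraph V) (hconn : G.Connected)
    (B : Set V) (hB : BoundaryOK G B) (u : V → ℝ) (hu : Set.InjOn u B)
    (𝓔 : Sym2 V → ℝ) (h𝓔 : ∀ e ∈ G.edgeSet, 0 < 𝓔 e)
    (h : V → ℂ) (hbd : ∀ b ∈ B, h b = (u b : ℂ))
    (hne : ∀ x y, G.Adj x y → h x ≠ h y)
    (henh : ∀ x, x ∉ B → ∑ y ∈ G.neighborFinset x, (𝓔 s(x, y) : ℂ) / (h x - h y) = 0) :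
    (∀ v , (h v).im = 0) ∧
    ∀ x y, G.Adj x y →
      ((𝓔 s(x, y) : ℂ) / (h x - h y) ^ 2).im = 0 ∧
      0 < ((𝓔 s(x, y) : ℂ) / (h x - h y) ^ 2).re :=
  stmt_4_general G hconn B hB u 𝓔 h𝓔 h hbd hne henh
end

section
/- Let G be a finite connected simple graph with boundary B as in the context. For any two injective functions u, u' : B → ℝ, the set Σ_u of orientations of G compatible with u and the set Σ_{u'} of orientations compatible with u' have the same (finite) cardinality. -/
attribute [local instance] Classical.propDecidable

variable {V : Type*} [Fintype V] [DecidableEq V]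

/-!
Compatibility with `u` depends only on the order that `u` induces on `B`, and any two orders are
joined by a chain of transpositions of consecutive elements, each removing one inversion. So let
`b` immediately precede `a` in the order of `u`, and let `v` be `u` with these two values
exchanged. An orientation compatible with `u` stays compatible with `v` unless it has a directed
path from `a` to `b`. Reversing every edge that lies on such a path keeps the orientation acyclic,
keeps every interior vertex a non-source and non-sink, and produces a path from `b` to `a`, so the
result is compatible with `v`. The reversal undoes itself (applied to `b` and `a`), which gives an
injection from `Σ_u` into `Σ_v`; by symmetry the two sets have the same size.
-/

open Relation

namespace Relation

variable {α : Type*} {r s : α → α → Prop} {x y : α}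

theorem TransGen.of_forward_invariant {I : α → Prop} (h : ∀ x y, r x y → I x → s x y ∧ I y)
    (hxy : TransGen r x y) (hx : I x) : TransGen s x y ∧ I y := by
  induction hxy with
  | single hxy => exact (h _ _ hxy hx).imp_left TransGen.single
  | tail _ hzy ih => exact (h _ _ hzy ih.2).imp_left ih.1.tail

theorem TransGen.of_backward_invariant {I : α → Prop} (h : ∀ x y, r x y → I y → s x y ∧ I x)
    (hxy : TransGen r x y) (hy : I y) : TransGen s x y ∧ I x := by
  induction hxy using TransGen.head_induction_on with
  | single hxy => exact (h _ _ hxy hy).imp_left TransGen.single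
  | head hxz _ ih => exact (h _ _ hxz ih.2).imp_left (TransGen.head · ih.1)

theorem TransGen.swap_of_between {P Q : α → Prop} (hP : ∀ x y, r x y → P x → P y)
    (hQ : ∀ x y, r x y → Q y → Q x) (hrs : ∀ x y, r x y → P x → Q y → s y x)
    (hxy : TransGen r x y) (hx : P x) (hy : Q y) : TransGen s y x := by
  induction hxy with
  | single hxy => exact TransGen.single (hrs _ _ hxy hx hy)
  | @tail z _ hxz hzy ih =>
    have hz : P z := (hxz.of_forward_invariant (fun x y h hx => ⟨h, hP x y h hx⟩) hx).2
    exact TransGen.head (hrs _ _ hzy hz hy) (ih (hQ _ _ hzy hy))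

end Relation

namespace GraphOrientation

variable {V : Type*} {G : SimpleGraph V}

theorem ext {σ τ : GraphOrientation G} (h : σ.dir = τ.dir) : σ = τ := by
  cases σ; cases τ; congr

instance [Finite V] : Finite (GraphOrientation G) :=
  Finite.of_injective dir fun _ _ => ext

def reverseOn (σ : GraphOrientation G) (S : Set V) : GraphOrientation G where
  dir x y := if x ∈ S ∧ y ∈ S then σ.dir y x else σ.dir x y
  dir_adj x y h := by
    split_ifs at h
    · exact (σ.dir_adj y x h).symm
    · exact σ.dir_adj x y h
  dir_total x y hxy := by
    simp only [and_comm (a := y ∈ S)]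
    split_ifs
    · exact σ.dir_total y x hxy.symm
    · exact σ.dir_total x y hxy

theorem reverseOn_reverseOn (σ : GraphOrientation G) (S : Set V) :
    (σ.reverseOn S).reverseOn S = σ := by
  refine ext (funext₂ fun x y => ?_)
  simp only [reverseOn, and_comm (a := y ∈ S)]
  split_ifs <;> rfl

def between (σ : GraphOrientation G) (a b : V) : Set V :=
  {x | ReflTransGen σ.dir a x ∧ ReflTransGen σ.dir x b}

/-- An edge lies on a directed path from `a` to `b` iff both its ends lie in `σ.between a b`, so
this reverses exactly the edges on such paths. -/
def reversePaths (σ : GraphOrientation G) (a b : V) : GraphOrientation G :=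
  σ.reverseOn (σ.between a b)

section reversePaths

variable {σ : GraphOrientation G} {a b x y : V}

theorem dir_of_reversePaths_dir_of_not_mem (h : (σ.reversePaths a b).dir x y)
    (hxy : ¬(x ∈ σ.between a b ∧ y ∈ σ.between a b)) : σ.dir x y := by
  simpa only [reversePaths, reverseOn, if_neg hxy] using h

theorem dir_of_reversePaths_dir_of_mem (h : (σ.reversePaths a b).dir x y)
    (hx : x ∈ σ.between a b) (hy : y ∈ σ.between a b) : σ.dir y x := by
  simpa only [reversePaths, reverseOn, if_pos (And.intro hx hy)] using h

theorem reversePaths_dir_of_dir (h : σ.dir x y) (hx : ReflTransGen σ.dir a x)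
    (hy : ReflTransGen σ.dir y b) : (σ.reversePaths a b).dir y x := by
  have hS : y ∈ σ.between a b ∧ x ∈ σ.between a b := ⟨⟨hx.tail h, hy⟩, hx, hy.head h⟩
  simpa only [reversePaths, reverseOn, if_pos hS] using h

theorem reflTransGen_from_of_reversePaths_dir (h : (σ.reversePaths a b).dir x y)
    (hx : ReflTransGen σ.dir a x) : ReflTransGen σ.dir a y := by
  by_cases hxy : x ∈ σ.between a b ∧ y ∈ σ.between a b
  · exact hxy.2.1
  · exact hx.tail (dir_of_reversePaths_dir_of_not_mem h hxy)

theorem reflTransGen_to_of_reversePaths_dir (h : (σ.reversePaths a b).dir x y)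
    (hy : ReflTransGen σ.dir y b) : ReflTransGen σ.dir x b := by
  by_cases hxy : x ∈ σ.between a b ∧ y ∈ σ.between a b
  · exact hxy.1.2
  · exact hy.head (dir_of_reversePaths_dir_of_not_mem h hxy)

theorem transGen_of_transGen_reversePaths_of_not_to (h : TransGen (σ.reversePaths a b).dir x y)
    (hx : ¬ReflTransGen σ.dir x b) : TransGen σ.dir x y ∧ ¬ReflTransGen σ.dir y b :=
  h.of_forward_invariant (fun _ _ h hx => ⟨dir_of_reversePaths_dir_of_not_mem h
    fun hS => hx hS.1.2, mt (reflTransGen_to_of_reversePaths_dir h) hx⟩) hx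

theorem transGen_of_transGen_reversePaths_of_not_from (h : TransGen (σ.reversePaths a b).dir x y)
    (hy : ¬ReflTransGen σ.dir a y) : TransGen σ.dir x y ∧ ¬ReflTransGen σ.dir a x :=
  h.of_backward_invariant (fun _ _ h hy => ⟨dir_of_reversePaths_dir_of_not_mem h
    fun hS => hy hS.2.1, mt (reflTransGen_from_of_reversePaths_dir h) hy⟩) hy

theorem transGen_swap_of_transGen_reversePaths (h : TransGen (σ.reversePaths a b).dir x y)
    (hx : ReflTransGen σ.dir a x) (hy : ReflTransGen σ.dir y b) : TransGen σ.dir y x :=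
  h.swap_of_between (fun _ _ h => reflTransGen_from_of_reversePaths_dir h)
    (fun _ _ h => reflTransGen_to_of_reversePaths_dir h)
    (fun _ _ h hx hy => dir_of_reversePaths_dir_of_mem h
      ⟨hx, reflTransGen_to_of_reversePaths_dir h hy⟩
      ⟨reflTransGen_from_of_reversePaths_dir h hx, hy⟩) hx hy

theorem transGen_reversePaths_swap_of_transGen (h : TransGen σ.dir x y)
    (hx : ReflTransGen σ.dir a x) (hy : ReflTransGen σ.dir y b) :
    TransGen (σ.reversePaths a b).dir y x :=
  h.swap_of_between (fun _ _ h hx => hx.tail h) (fun _ _ h hy => hy.head h)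
    (fun _ _ => reversePaths_dir_of_dir) hx hy

theorem reversePaths_acyclic (hσ : ∀ z, ¬TransGen σ.dir z z) (z : V) :
    ¬TransGen (σ.reversePaths a b).dir z z := by
  intro h
  by_cases hto : ReflTransGen σ.dir z b
  · by_cases hfrom : ReflTransGen σ.dir a z
    · exact hσ z (transGen_swap_of_transGen_reversePaths h hfrom hto)
    · exact hσ z (transGen_of_transGen_reversePaths_of_not_from h hfrom).1
  · exact hσ z (transGen_of_transGen_reversePaths_of_not_to h hto).1

theorem between_reversePaths (hab : TransGen σ.dir a b) :
    (σ.reversePaths a b).between b a = σ.between a b := by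
  ext x
  constructor
  · rintro ⟨hbx, hxa⟩
    constructor
    · by_contra hx
      rcases reflTransGen_iff_eq_or_transGen.mp hbx with rfl | hbx
      · exact hx hab.to_reflTransGen
      · exact (transGen_of_transGen_reversePaths_of_not_from hbx hx).2 hab.to_reflTransGen
    · by_contra hx
      rcases reflTransGen_iff_eq_or_transGen.mp hxa with rfl | hxa
      · exact hx hab.to_reflTransGen
      · exact (transGen_of_transGen_reversePaths_of_not_to hxa hx).2 hab.to_reflTransGen
  · rintro ⟨hax, hxb⟩
    constructor
    · rcases reflTransGen_iff_eq_or_transGen.mp hxb with rfl | hxb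
      · exact .refl
      · exact (transGen_reversePaths_swap_of_transGen hxb hax .refl).to_reflTransGen
    · rcases reflTransGen_iff_eq_or_transGen.mp hax with rfl | hax
      · exact .refl
      · exact (transGen_reversePaths_swap_of_transGen hax .refl hxb).to_reflTransGen

theorem reversePaths_reversePaths (hab : TransGen σ.dir a b) :
    (σ.reversePaths a b).reversePaths b a = σ := by
  rw [reversePaths, between_reversePaths hab, reversePaths, reverseOn_reverseOn]

theorem exists_dir_reversePaths (hxa : x ≠ a) (hxb : x ≠ b) (hout : ∃ y, σ.dir x y)
    (hin : ∃ y, σ.dir y x) :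
    (∃ y, (σ.reversePaths a b).dir x y) ∧ ∃ y, (σ.reversePaths a b).dir y x := by
  by_cases hx : x ∈ σ.between a b
  · obtain ⟨w, haw, hwx⟩ := TransGen.tail'_iff.mp
      ((reflTransGen_iff_eq_or_transGen.mp hx.1).resolve_left hxa)
    obtain ⟨z, hxz, hzb⟩ := TransGen.head'_iff.mp
      ((reflTransGen_iff_eq_or_transGen.mp hx.2).resolve_left hxb.symm)
    exact ⟨⟨w, reversePaths_dir_of_dir hwx haw hx.2⟩, z, reversePaths_dir_of_dir hxz hx.1 hzb⟩
  · obtain ⟨y, hxy⟩ := hout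
    obtain ⟨z, hzx⟩ := hin
    simp only [reversePaths, reverseOn, hx, false_and, and_false, if_false]
    exact ⟨⟨y, hxy⟩, z, hzx⟩

end reversePaths

end GraphOrientation

open GraphOrientation

section AdjacentSwap

variable {V : Type*} {B : Set V} {u v : V → ℝ} {a b p q : V}

/-- `v` orders `B` as `u` does, except that it reverses the order of `a` and `b`; this forces `b`
and `a` to be consecutive in both orders. -/
structure IsAdjacentSwap (B : Set V) (u v : V → ℝ) (a b : V) : Prop where
  left_mem : a ∈ B
  right_mem : b ∈ B
  lt : u b < u a
  lt' : v a < v b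
  lt_iff_lt : ∀ p ∈ B, ∀ q ∈ B, ¬(p = a ∧ q = b) → ¬(p = b ∧ q = a) → (u q < u p ↔ v q < v p)

theorem IsAdjacentSwap.symm (h : IsAdjacentSwap B u v a b) : IsAdjacentSwap B v u b a :=
  ⟨h.right_mem, h.left_mem, h.lt', h.lt, fun p hp q hq hba hab =>
    (h.lt_iff_lt p hp q hq hab hba).symm⟩

theorem IsAdjacentSwap.lt_of_lt (h : IsAdjacentSwap B u v a b) (hp : p ∈ B) (hq : q ∈ B)
    (hpq : u q < u p) (hab : ¬(p = a ∧ q = b)) : v q < v p := by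
  by_cases hba : p = b ∧ q = a
  · obtain ⟨rfl, rfl⟩ := hba
    exact absurd hpq h.lt.asymm
  · exact (h.lt_iff_lt p hp q hq hab hba).1 hpq

variable {G : SimpleGraph V} {σ : GraphOrientation G}

theorem IsAdjacentSwap.compatible_iff (h : IsAdjacentSwap B u v a b) (hσ : Compatible G B u σ) :
    Compatible G B v σ ↔ ¬TransGen σ.dir a b := by
  refine ⟨fun hσ' hab => (hσ'.2.2 a h.left_mem b h.right_mem hab).asymm h.lt', fun hab => ?_⟩
  refine ⟨hσ.1, hσ.2.1, fun p hp q hq hpq => h.lt_of_lt hp hq (hσ.2.2 p hp q hq hpq) ?_⟩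
  rintro ⟨rfl, rfl⟩
  exact hab hpq

theorem IsAdjacentSwap.compatible_reversePaths (h : IsAdjacentSwap B u v a b)
    (hσ : Compatible G B u σ) (hab : TransGen σ.dir a b) :
    Compatible G B v (σ.reversePaths a b) := by
  obtain ⟨hacyc, hinterior, hboundary⟩ := hσ
  have hτ := reversePaths_acyclic (a := a) (b := b) hacyc
  have hba : TransGen (σ.reversePaths a b).dir b a :=
    transGen_reversePaths_swap_of_transGen hab .refl .refl
  refine ⟨hτ, fun x hx => exists_dir_reversePaths (fun e => hx (e ▸ h.left_mem))
    (fun e => hx (e ▸ h.right_mem)) (hinterior x hx).1 (hinterior x hx).2, ?_⟩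
  intro p hp q hq hpq
  have hne : p ≠ q := by rintro rfl; exact hτ p hpq
  have hab' : ¬(p = a ∧ q = b) := by rintro ⟨rfl, rfl⟩; exact hτ p (hpq.trans hba)
  by_cases hto : ReflTransGen σ.dir p b
  · by_cases hfrom : ReflTransGen σ.dir a q
    · have hp' : p ≠ a → p ≠ b → v b < v p := fun hpa hpb =>
        h.lt_of_lt hp h.right_mem (hboundary p hp b h.right_mem
          ((reflTransGen_iff_eq_or_transGen.mp hto).resolve_left hpb.symm)) (hpa ·.1)
      have hq' : q ≠ a → q ≠ b → v q < v a := fun hqa hqb =>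
        h.lt_of_lt h.left_mem hq (hboundary a h.left_mem q hq
          ((reflTransGen_iff_eq_or_transGen.mp hfrom).resolve_left hqa)) (hqb ·.2)
      rcases eq_or_ne p a with rfl | hpa
      · exact hq' hne.symm fun hqb => hab' ⟨rfl, hqb⟩
      rcases eq_or_ne q b with rfl | hqb
      · exact hp' hpa hne
      have hvq : v q ≤ v a := by
        rcases eq_or_ne q a with rfl | hqa
        exacts [le_rfl, (hq' hqa hqb).le]
      have hvp : v b ≤ v p := by
        rcases eq_or_ne p b with rfl | hpb
        exacts [le_rfl, (hp' hpa hpb).le]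
      linarith [h.lt']
    · exact h.lt_of_lt hp hq (hboundary p hp q hq
        (transGen_of_transGen_reversePaths_of_not_from hpq hfrom).1) hab'
  · exact h.lt_of_lt hp hq (hboundary p hp q hq
      (transGen_of_transGen_reversePaths_of_not_to hpq hto).1) hab'

theorem IsAdjacentSwap.ncard_compatible_le [Finite V] (h : IsAdjacentSwap B u v a b) :
    {σ : GraphOrientation G | Compatible G B u σ}.ncard ≤
      {σ : GraphOrientation G | Compatible G B v σ}.ncard := by
  let f (σ : GraphOrientation G) := if TransGen σ.dir a b then σ.reversePaths a b else σ
  have hf : ∀ σ, Compatible G B u σ → (TransGen (f σ).dir b a ↔ TransGen σ.dir a b) := by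
    intro σ hσ
    by_cases hab : TransGen σ.dir a b
    · simpa [f, hab] using transGen_reversePaths_swap_of_transGen hab .refl .refl
    · simpa [f, hab] using fun hba => (hσ.2.2 b h.right_mem a h.left_mem hba).asymm h.lt
  refine Set.ncard_le_ncard_of_injOn f (fun σ hσ => ?_) (fun σ hσ σ' hσ' he => ?_)
  · by_cases hab : TransGen σ.dir a b
    · simpa [f, hab] using h.compatible_reversePaths hσ hab
    · simpa [f, hab] using (h.compatible_iff hσ).2 hab
  · have hpath := (hf σ hσ).symm.trans (he ▸ hf σ' hσ')
    by_cases hab : TransGen σ.dir a b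
    · have hab' := hpath.1 hab
      simp only [f, hab, hab', if_true] at he
      rw [← reversePaths_reversePaths hab, he, reversePaths_reversePaths hab']
    · have hab' := mt hpath.2 hab
      simpa [f, hab, hab'] using he

theorem IsAdjacentSwap.ncard_compatible_eq [Finite V] (h : IsAdjacentSwap B u v a b) :
    {σ : GraphOrientation G | Compatible G B u σ}.ncard =
      {σ : GraphOrientation G | Compatible G B v σ}.ncard :=
  h.ncard_compatible_le.antisymm h.symm.ncard_compatible_le

end AdjacentSwap

section Inversions

variable {V : Type*} {B : Set V} {u u' : V → ℝ}

def inversions (B : Set V) (u u' : V → ℝ) : Set (V × V) :=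
  {p | p.1 ∈ B ∧ p.2 ∈ B ∧ u p.2 < u p.1 ∧ u' p.1 < u' p.2}

theorem lt_iff_lt_of_inversions_eq_empty (hu : Set.InjOn u B) (hu' : Set.InjOn u' B)
    (h : inversions B u u' = ∅) {p q : V} (hp : p ∈ B) (hq : q ∈ B) :
    u q < u p ↔ u' q < u' p := by
  have hnot : ∀ p ∈ B, ∀ q ∈ B, u q < u p → ¬u' p < u' q := fun p hp q hq h1 h2 =>
    h.subset (show (p, q) ∈ inversions B u u' from ⟨hp, hq, h1, h2⟩)
  constructor
  · intro hlt
    have hne : u' q ≠ u' p := fun e => hlt.ne (congrArg u (hu' hq hp e))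
    exact lt_of_le_of_ne (not_lt.1 (hnot p hp q hq hlt)) hne
  · intro hlt
    have hne : u p ≠ u q := fun e => hlt.ne' (congrArg u' (hu hp hq e))
    by_contra hle
    exact hnot q hq p hp (lt_of_le_of_ne (not_lt.1 hle) hne) hlt

theorem compatible_congr {G : SimpleGraph V} {σ : GraphOrientation G}
    (h : ∀ p ∈ B, ∀ q ∈ B, u q < u p ↔ u' q < u' p) :
    Compatible G B u σ ↔ Compatible G B u' σ := by
  refine and_congr_right' (and_congr_right' ?_)
  exact forall₂_congr fun p hp => forall₂_congr fun q hq => imp_congr_right fun _ => h p hp q hq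

theorem exists_adjacent_inversion [Finite V] (h : (inversions B u u').Nonempty) :
    ∃ a b, (a, b) ∈ inversions B u u' ∧ ∀ c ∈ B, ¬(u b < u c ∧ u c < u a) := by
  obtain ⟨⟨a, b⟩, hab, hmin⟩ :=
    Set.exists_min_image _ (fun p : V × V => u p.1 - u p.2) (Set.toFinite _) h
  refine ⟨a, b, hab, fun c hc ⟨hbc, hca⟩ => ?_⟩
  obtain ⟨ha, hb, -, hab'⟩ := hab
  rcases lt_or_ge (u' a) (u' c) with hac | hca'
  · have := hmin (a, c) ⟨ha, hc, hca, hac⟩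
    dsimp only at this
    linarith
  · have := hmin (c, b) ⟨hc, hb, hbc, hca'.trans_lt hab'⟩
    dsimp only at this
    linarith

theorem isAdjacentSwap_comp_swap [DecidableEq V] {a b : V} (hu : Set.InjOn u B) (ha : a ∈ B)
    (hb : b ∈ B) (hlt : u b < u a) (hadj : ∀ c ∈ B, ¬(u b < u c ∧ u c < u a)) :
    IsAdjacentSwap B u (u ∘ Equiv.swap a b) a b := by
  have hout : ∀ c ∈ B, c ≠ a → c ≠ b → u c < u b ∨ u a < u c := by
    intro c hc hca hcb
    have h1 : u c ≠ u b := fun e => hcb (hu hc hb e)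
    have h2 : u c ≠ u a := fun e => hca (hu hc ha e)
    have := hadj c hc
    grind
  refine ⟨ha, hb, hlt, by simpa using hlt, fun p hp q hq hab hba => ?_⟩
  have := hout p hp
  have := hout q hq
  simp only [Function.comp_apply, Equiv.swap_apply_def]
  split_ifs <;> grind

theorem IsAdjacentSwap.inversions_ssubset {v : V → ℝ} {a b : V} (h : IsAdjacentSwap B u v a b)
    (h' : u' a < u' b) : inversions B v u' ⊂ inversions B u u' := by
  refine ⟨fun ⟨p, q⟩ ⟨hp, hq, hvpq, hpq'⟩ => ⟨hp, hq, ?_, hpq'⟩, fun hsub => ?_⟩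
  · refine (h.symm.lt_of_lt hp hq hvpq ?_)
    rintro ⟨rfl, rfl⟩
    exact hpq'.asymm h'
  · have hab : (a, b) ∈ inversions B u u' := ⟨h.left_mem, h.right_mem, h.lt, h'⟩
    exact (hsub hab).2.2.1.asymm h.lt'

end Inversions

theorem ncard_compatible_eq_of_injOn {V : Type*} [Finite V] (G : SimpleGraph V) {B : Set V}
    {u u' : V → ℝ} (hu : Set.InjOn u B) (hu' : Set.InjOn u' B) :
    {σ : GraphOrientation G | Compatible G B u σ}.ncard =
      {σ : GraphOrientation G | Compatible G B u' σ}.ncard := by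
  induction h : (inversions B u u').ncard using Nat.strong_induction_on generalizing u with
  | _ n ih =>
  rcases (inversions B u u').eq_empty_or_nonempty with hempty | hne
  · congr 1
    ext σ
    exact compatible_congr fun p hp q hq => lt_iff_lt_of_inversions_eq_empty hu hu' hempty hp hq
  obtain ⟨a, b, ⟨ha, hb, hlt, hlt'⟩, hadj⟩ := exists_adjacent_inversion hne
  have hswap := isAdjacentSwap_comp_swap hu ha hb hlt hadj
  have hmaps : Set.MapsTo (Equiv.swap a b) B B := fun x hx => by
    rw [Equiv.swap_apply_def]; split_ifs <;> assumption
  rw [hswap.ncard_compatible_eq]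
  exact ih _ (h ▸ Set.ncard_lt_ncard (hswap.inversions_ssubset hlt'))
    (hu.comp (Equiv.swap a b).injective.injOn hmaps) rfl

theorem stmt_5_general (G : SimpleGraph V) (B : Set V)
    (u u' : V → ℝ) (hu : Set.InjOn u B) (hu' : Set.InjOn u' B) :
    {σ : GraphOrientation G | Compatible G B u σ}.Finite ∧
    {σ : GraphOrientation G | Compatible G B u' σ}.Finite ∧
    {σ : GraphOrientation G | Compatible G B u σ}.ncard =
      {σ : GraphOrientation G | Compatible G B u' σ}.ncard :=
  ⟨Set.toFinite _, Set.toFinite _, ncard_compatible_eq_of_injOn G hu hu'⟩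

/-- the number of compatible orientations does not depend on the (injective)
boundary values. -/
theorem stmt_5 (G : SimpleGraph V) (hconn : G.Connected)
    (B : Set V) (hB : BoundaryOK G B)
    (u u' : V → ℝ) (hu : Set.InjOn u B) (hu' : Set.InjOn u' B) :
    {σ : GraphOrientation G | Compatible G B u σ}.Finite ∧
    {σ : GraphOrientation G | Compatible G B u' σ}.Finite ∧
    {σ : GraphOrientation G | Compatible G B u σ}.ncard =
      {σ : GraphOrientation G | Compatible G B u' σ}.ncard :=
  stmt_5_general G B u u' hu hu'
end

section
/- Let K be a totally real number field. Then there exist an integer d ≥ 1, rational numbers a₀ < a₁ < ... < a_d, and positive rational numbers e₀, e₁, ..., e_d such that the polynomial q(X) = Σ_{i=0}^{d} e_i · ∏_{j ≠ i} (X − a_j) is irreducible over ℚ, all of its complex roots are real, and for every root x of q the field ℚ(x) is isomorphic to K. Equivalently, K is generated by a real solution x of the equation Σ_{i=0}^{d} e_i/(x − a_i) = 0 with rational data, and all solutions of this equation generate fields isomorphic to K. -/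
/-!
A primitive element of `K` has an irreducible minimal polynomial `p` of some degree `n ≥ 1`
whose roots are real (total reality) and distinct, say `r₀ < ⋯ < rₙ₋₁`. Choose rationals
`a₀ < r₀ < a₁ < ⋯ < rₙ₋₁ < aₙ`. Lagrange interpolation at the `n + 1` nodes `aᵢ` gives
`p = Σᵢ eᵢ ∏_{j ≠ i} (X - aⱼ)` with `eᵢ = p(aᵢ) / ∏_{j ≠ i} (aᵢ - aⱼ)`, and `eᵢ > 0` because
interlacing pairs each factor `aᵢ - r_k` of the numerator with a factor `aᵢ - aⱼ` of the
denominator of the same sign. Every real root of `p` has minimal polynomial `p`, so it generates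
a field isomorphic to `ℚ[X]/(p) ≅ K`.
-/
open Polynomial Finset IntermediateField

theorem eq_sum_C_mul_prod_X_sub_C {F ι : Type*} [Field F] [Fintype ι] [DecidableEq ι]
    {v : ι → F} (hv : Function.Injective v) {p : F[X]} (hp : p.degree < Fintype.card ι) :
    p = ∑ i, C (p.eval (v i) / ∏ j ∈ univ.erase i, (v i - v j)) *
      ∏ j ∈ univ.erase i, (X - C (v j)) := by
  conv_lhs => rw [Lagrange.eq_interpolate (s := univ) hv.injOn hp]
  refine sum_congr rfl fun i _ => ?_
  simp only [Lagrange.basis, Lagrange.basisDivisor, prod_mul_distrib, ← map_prod, div_eq_mul_inv,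
    C_mul, prod_inv_distrib, mul_assoc]

theorem Fin.prod_univ_erase_eq_prod_succAbove {M : Type*} [CommMonoid M] {n : ℕ}
    (f : Fin (n + 1) → M) (i : Fin (n + 1)) :
    ∏ j ∈ univ.erase i, f j = ∏ k, f (i.succAbove k) := by
  rw [Fin.univ_succAbove _ i, erase_cons, prod_map]
  rfl

theorem splits_of_forall_im_eq_zero {P : ℝ[X]}
    (h : ∀ z : ℂ, aeval z P = 0 → z.im = 0) : P.Splits :=
  (IsAlgClosed.splits (P.map (algebraMap ℝ ℂ))).of_splits_map (algebraMap ℝ ℂ) fun z hz => by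
    rw [mem_roots', IsRoot, eval_map_algebraMap] at hz
    exact ⟨z.re, Complex.ext rfl (h z hz.2).symm⟩

theorem exists_strictMono_eq_prod_X_sub_C {F : Type*} [Field F] [LinearOrder F] {P : F[X]}
    (hm : P.Monic) (hs : P.Splits) (hn : P.roots.Nodup) :
    ∃ r : Fin P.natDegree → F, StrictMono r ∧ P = ∏ k, (X - C (r k)) := by
  have hcard : #P.roots.toFinset = P.natDegree := by
    rw [Multiset.toFinset_card_of_nodup hn, hs.natDegree_eq_card_roots]
  refine ⟨P.roots.toFinset.orderEmbOfFin hcard, OrderEmbedding.strictMono _, ?_⟩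
  calc P = (P.roots.map fun t => X - C t).prod := hs.eq_prod_roots_of_monic hm
    _ = ∏ t ∈ P.roots.toFinset, (X - C t) := by
      rw [prod_eq_multiset_prod, Multiset.toFinset_val, hn.dedup]
    _ = ∏ t ∈ univ.map (P.roots.toFinset.orderEmbOfFin hcard).toEmbedding, (X - C t) := by
      rw [map_orderEmbOfFin_univ]
    _ = _ := prod_map _ _ _

theorem exists_rat_btwn_finsets (s t : Finset ℝ) (H : ∀ x ∈ s, ∀ y ∈ t, x < y) :
    ∃ q : ℚ, (∀ x ∈ s, x < q) ∧ ∀ y ∈ t, (q : ℝ) < y := by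
  obtain ⟨b₁, hs₁, ht₁⟩ := s.exists_between' t H
  obtain ⟨b₀, hs₀, hb₀⟩ := s.exists_between' {b₁} (by simpa using hs₁)
  obtain ⟨q, hq₀, hq₁⟩ := exists_rat_btwn (hb₀ b₁ (mem_singleton_self _))
  exact ⟨q, fun x hx => (hs₀ x hx).trans hq₀, fun y hy => hq₁.trans (ht₁ y hy)⟩

def Interlaces {α : Type*} [LT α] {n : ℕ} (a : Fin (n + 1) → α) (r : Fin n → α) : Prop :=
  ∀ k, a k.castSucc < r k ∧ r k < a k.succ

namespace Interlaces

variable {n : ℕ}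

theorem strictMono {α : Type*} [Preorder α] {a : Fin (n + 1) → α} {r : Fin n → α}
    (h : Interlaces a r) : StrictMono a :=
  Fin.strictMono_iff_lt_succ.2 fun k => (h k).1.trans (h k).2

variable {F : Type*} [Field F] [LinearOrder F] [IsStrictOrderedRing F]
  {a : Fin (n + 1) → F} {r : Fin n → F}

theorem div_sub_succAbove_pos (h : Interlaces a r) (i : Fin (n + 1)) (k : Fin n) :
    0 < (a i - r k) / (a i - a (i.succAbove k)) := by
  rcases lt_or_ge k.castSucc i with hki | hik
  · rw [Fin.succAbove_of_castSucc_lt _ _ hki]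
    have : r k < a i := (h k).2.trans_le (h.strictMono.monotone (Fin.castSucc_lt_iff_succ_le.1 hki))
    exact div_pos (sub_pos.2 this) (sub_pos.2 (h.strictMono hki))
  · rw [Fin.succAbove_of_le_castSucc _ _ hik]
    have : a i < r k := (h.strictMono.monotone hik).trans_lt (h k).1
    exact div_pos_of_neg_of_neg (sub_neg.2 this)
      (sub_neg.2 (h.strictMono (hik.trans_lt (Fin.castSucc_lt_succ))))

theorem prod_sub_div_prod_sub_pos (h : Interlaces a r) (i : Fin (n + 1)) :
    0 < (∏ k, (a i - r k)) / ∏ j ∈ univ.erase i, (a i - a j) := by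
  rw [Fin.prod_univ_erase_eq_prod_succAbove (fun j => a i - a j), ← prod_div_distrib]
  exact prod_pos fun k _ => h.div_sub_succAbove_pos i k

end Interlaces

theorem exists_rat_interlaces {n : ℕ} {r : Fin n → ℝ} (hr : StrictMono r) :
    ∃ a : Fin (n + 1) → ℚ, Interlaces (fun i => (a i : ℝ)) r := by
  have hsep (i : Fin (n + 1)) : ∃ q : ℚ,
      (∀ x ∈ (univ.filter fun k : Fin n => k.castSucc < i).image r, x < q) ∧
      ∀ y ∈ (univ.filter fun k : Fin n => i ≤ k.castSucc).image r, (q : ℝ) < y := by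
    refine exists_rat_btwn_finsets _ _ ?_
    simp only [mem_image, mem_filter, mem_univ, true_and]
    rintro _ ⟨k, hk, rfl⟩ _ ⟨l, hl, rfl⟩
    exact hr (Fin.castSucc_lt_castSucc_iff.1 (hk.trans_le hl))
  choose a ha using hsep
  refine ⟨a, fun k => ⟨(ha _).2 _ ?_, (ha _).1 _ ?_⟩⟩ <;>
    simp only [mem_image, mem_filter, mem_univ, true_and]
  exacts [⟨k, le_rfl, rfl⟩, ⟨k, Fin.castSucc_lt_succ, rfl⟩]

theorem Interlaces.eval_div_prod_sub_pos {n : ℕ} {p : ℚ[X]} {r : Fin n → ℝ}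
    (hp : p.map (algebraMap ℚ ℝ) = ∏ k, (X - C (r k))) {a : Fin (n + 1) → ℚ}
    (h : Interlaces (fun i => (a i : ℝ)) r) (i : Fin (n + 1)) :
    0 < p.eval (a i) / ∏ j ∈ univ.erase i, (a i - a j) := by
  have hev : ((p.eval (a i) : ℚ) : ℝ) = ∏ k, ((a i : ℝ) - r k) :=
    calc ((p.eval (a i) : ℚ) : ℝ) = aeval (a i : ℝ) p :=
          (aeval_algebraMap_apply_eq_algebraMap_eval (a i) p).symm
      _ = ∏ k, ((a i : ℝ) - r k) := by simpa [eval_prod] using congrArg (eval (a i : ℝ)) hp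
  have := h.prod_sub_div_prod_sub_pos i
  rw [← hev] at this
  exact_mod_cast this

theorem PowerBasis.nonempty_adjoin_algEquiv_of_aeval_eq_zero {F K L : Type*} [Field F] [Field K]
    [Field L] [Algebra F K] [Algebra F L] (pb : PowerBasis F K) {x : L}
    (hx : aeval x (minpoly F pb.gen) = 0) : Nonempty (F⟮x⟯ ≃ₐ[F] K) := by
  have hmin : minpoly F pb.gen = minpoly F x :=
    minpoly.eq_of_irreducible_of_monic (minpoly.irreducible pb.isIntegral_gen) hx
      (minpoly.monic pb.isIntegral_gen)
  have hx_int : IsIntegral F x := ⟨_, minpoly.monic pb.isIntegral_gen, hx⟩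
  refine ⟨(adjoin.powerBasis hx_int).equivOfMinpoly pb ?_⟩
  rw [adjoin.powerBasis_gen, minpoly_gen, hmin]

/-- every totally real number field arises from an enharmonic (star-graph)
equation with rational data: there are rationals a₀ < ⋯ < a_d and positive rationals
e₀, …, e_d so that q(X) = Σᵢ eᵢ ∏_{j≠i} (X − aⱼ) is irreducible with all roots real, and
each real root generates a field isomorphic to K. -/
theorem stmt_8 (K : Type*) [Field K] [NumberField K]
    (htotreal : ∀ φ : K →+* ℂ, ∀ x : K, (φ x).im = 0) :
    ∃ d : ℕ, 1 ≤ d ∧ ∃ a : Fin (d + 1) → ℚ, StrictMono a ∧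
      ∃ e : Fin (d + 1) → ℚ, (∀ i, 0 < e i) ∧
        (let q : Polynomial ℚ := ∑ i, Polynomial.C (e i) *
            ∏ j ∈ Finset.univ.erase i, (Polynomial.X - Polynomial.C (a j));
          Irreducible q ∧
          (∀ z : ℂ, Polynomial.aeval z q = 0 → z.im = 0) ∧
          (∃ x : ℝ, Polynomial.aeval x q = 0) ∧
          ∀ x : ℝ, Polynomial.aeval x q = 0 →
            Nonempty ((IntermediateField.adjoin ℚ {x} : IntermediateField ℚ ℝ) ≃ₐ[ℚ] K)) := by
  let pb := Field.powerBasisOfFiniteOfSeparable ℚ K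
  set p := minpoly ℚ pb.gen
  have hp_irr : Irreducible p := minpoly.irreducible pb.isIntegral_gen
  have hp_monic : p.Monic := minpoly.monic pb.isIntegral_gen
  have hp_real (z : ℂ) (hz : aeval z p = 0) : z.im = 0 := by
    simpa [pb.lift_gen z hz] using htotreal (pb.lift z hz : K →+* ℂ) pb.gen
  set P := p.map (algebraMap ℚ ℝ)
  have hP_deg : P.natDegree = p.natDegree := natDegree_map _
  obtain ⟨r, hr, hPr⟩ := exists_strictMono_eq_prod_X_sub_C (hp_monic.map _)
    (splits_of_forall_im_eq_zero fun z hz => hp_real z (by rwa [aeval_map_algebraMap] at hz))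
    (nodup_roots hp_irr.separable.map)
  obtain ⟨a, ha⟩ := exists_rat_interlaces hr
  have ha_mono : StrictMono a := fun i j hij => by exact_mod_cast ha.strictMono hij
  have hp_eq := eq_sum_C_mul_prod_X_sub_C (p := p) ha_mono.injective (by
    rw [Fintype.card_fin, hP_deg, degree_eq_natDegree hp_monic.ne_zero]
    exact_mod_cast Nat.lt_succ_self _)
  have hdeg_pos : 0 < P.natDegree := hP_deg ▸ minpoly.natDegree_pos pb.isIntegral_gen
  refine ⟨P.natDegree, hdeg_pos, a, ha_mono, _, fun i => ha.eval_div_prod_sub_pos hPr i, ?_⟩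
  intro q
  rw [show q = p from hp_eq.symm]
  refine ⟨hp_irr, hp_real, ⟨r ⟨0, hdeg_pos⟩, ?_⟩,
    fun x hx => pb.nonempty_adjoin_algEquiv_of_aeval_eq_zero hx⟩
  have h := congrArg (aeval (r ⟨0, hdeg_pos⟩)) hPr
  rw [aeval_map_algebraMap, map_prod] at h
  exact h.trans (prod_eq_zero (mem_univ ⟨0, hdeg_pos⟩) (by simp))
end

section
/- Let a₀ < a₁ < ... < a_d be real numbers and let e₀, e₁, ..., e_d be positive real numbers. Then the polynomial q(X) = Σ_{i=0}^{d} e_i · ∏_{j ≠ i} (X − a_j) has degree d, all of its complex roots are real and simple, and it has exactly one root in each open interval (a_i, a_{i+1}) for i = 0, 1, ..., d−1 (these account for all d roots). Equivalently, the equation Σ_{i=0}^{d} e_i/(x − a_i) = 0 has exactly d real solutions, one strictly between each pair of consecutive a_i. -/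
/-!
At the node `aₖ` only the `k`-th summand of `q` survives, giving `eₖ ∏_{j ≠ k} (aₖ - aⱼ)`,
whose sign is `(-1)^(d-k)`. So `q` changes sign on each of the `d` intervals `(aᵢ, aᵢ₊₁)`
and has a root `xᵢ` there. As `q` has degree `d` (its leading coefficient is `∑ eᵢ > 0`),
it is a nonzero multiple of `∏ (X - xᵢ)`: these are all of its complex roots, and they are
simple.
-/

open Polynomial Finset Lagrange

section Nodal

variable {R : Type*} [CommRing R] {ι : Type*} [Fintype ι] [DecidableEq ι]

lemma eval_sum_C_mul_nodal_erase_self (v e : ι → R) (k : ι) :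
    (∑ i, C (e i) * nodal (univ.erase i) v).eval (v k) =
      e k * (nodal (univ.erase k) v).eval (v k) := by
  rw [eval_finsetSum, sum_eq_single k (fun i _ hik => ?_) (by simp)]
  · rw [eval_mul, eval_C]
  · rw [eval_mul, eval_nodal_at_node (mem_erase.mpr ⟨Ne.symm hik, mem_univ k⟩), mul_zero]

lemma degree_sum_C_mul_nodal_erase [Nontrivial R] {n : ℕ} (hι : Fintype.card ι = n + 1)
    (v e : ι → R) (he : ∑ i, e i ≠ 0) :
    (∑ i, C (e i) * nodal (univ.erase i) v).degree = n := by
  have hdeg (i : ι) : (nodal (univ.erase i) v).natDegree = n := by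
    rw [natDegree_nodal, card_erase_of_mem (mem_univ i), card_univ, hι, Nat.add_sub_cancel]
  refine degree_eq_of_le_of_coeff_ne_zero (degree_le_of_natDegree_le ?_) ?_
  · exact natDegree_sum_le_of_forall_le _ _ fun i _ => (natDegree_C_mul_le _ _).trans (hdeg i).le
  · rw [finsetSum_coeff]
    convert he using 2 with i
    rw [coeff_C_mul, ← hdeg i, (nodal_monic).coeff_natDegree, mul_one]

end Nodal

section Factorization

variable {F : Type*} [Field F] {ι : Type*} {s : Finset ι} {v : ι → F}

lemma eq_C_leadingCoeff_mul_nodal {p : F[X]} (hvs : Set.InjOn v s) (hp : p.degree = #s)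
    (hroots : ∀ i ∈ s, p.eval (v i) = 0) : p = C p.leadingCoeff * nodal s v := by
  have hp0 : p ≠ 0 := by rintro rfl; simp at hp
  have hlc : p.leadingCoeff ≠ 0 := leadingCoeff_ne_zero.mpr hp0
  refine eq_of_degree_sub_lt_of_eval_index_eq s hvs ?_ fun i hi => ?_
  · rw [← hp]
    refine degree_sub_lt_left ?_ hp0 ?_
    · rw [degree_C_mul hlc, degree_nodal, hp]
    · rw [leadingCoeff_mul, leadingCoeff_C, (nodal_monic).leadingCoeff, mul_one]
  · rw [hroots i hi, eval_mul, eval_nodal_at_node hi, mul_zero]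

lemma separable_C_mul_nodal {c : F} (hc : c ≠ 0) (hvs : Set.InjOn v s) :
    (C c * nodal s v).Separable :=
  (separable_prod_X_sub_C_iff'.mpr fun _ hi _ hj h => hvs hi hj h).unit_mul
    (isUnit_C.mpr hc.isUnit)

lemma aeval_C_mul_nodal_eq_zero_iff {L : Type*} [CommRing L] [IsDomain L] [Algebra F L]
    {c : F} (hc : c ≠ 0) {z : L} :
    aeval z (C c * nodal s v) = 0 ↔ ∃ i ∈ s, z = algebraMap F L (v i) := by
  simp [nodal, map_prod, prod_eq_zero_iff, sub_eq_zero, hc]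

end Factorization

section Ordered

variable {K : Type*} [CommRing K] [LinearOrder K] [IsStrictOrderedRing K] {d : ℕ}

lemma neg_one_pow_mul_eval_nodal_erase_pos {a : Fin (d + 1) → K} (ha : StrictMono a)
    (k : Fin (d + 1)) :
    0 < (-1) ^ (d - k : ℕ) * (nodal (univ.erase k) a).eval (a k) := by
  have hsplit : univ.erase k = Ioi k ∪ Iio k := by
    ext j
    simpa only [mem_erase, mem_univ, and_true, mem_union, mem_Ioi, mem_Iio] using
      ne_iff_lt_or_gt.trans or_comm
  have hIoi : ∏ j ∈ Ioi k, (a k - a j) = (-1) ^ (d - k : ℕ) * ∏ j ∈ Ioi k, (a j - a k) := by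
    have hcard : #(Ioi k) = d - k := by simp [Fin.card_Ioi]
    rw [← hcard, ← prod_neg]
    simp_rw [neg_sub]
  rw [eval_nodal, hsplit, prod_union (disjoint_Ioi_Iio k), hIoi, ← mul_assoc, ← mul_assoc,
    ← pow_add, Even.neg_one_pow ⟨_, rfl⟩, one_mul]
  exact mul_pos (prod_pos fun j hj => sub_pos.mpr (ha (mem_Ioi.mp hj)))
    (prod_pos fun j hj => sub_pos.mpr (ha (mem_Iio.mp hj)))

lemma mul_neg_of_neg_one_pow_mul_pos {f : Fin (d + 1) → K}
    (hf : ∀ k : Fin (d + 1), 0 < (-1) ^ (d - k : ℕ) * f k) (i : Fin d) :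
    f i.castSucc * f i.succ < 0 := by
  have h₁ := hf i.castSucc
  have h₂ := hf i.succ
  rw [Fin.val_castSucc, show d - (i : ℕ) = d - (i + 1) + 1 by omega, pow_succ] at h₁
  rw [Fin.val_succ] at h₂
  set s : K := (-1) ^ (d - (i + 1))
  have hs : s * s = 1 := by rw [← pow_add, Even.neg_one_pow ⟨_, rfl⟩]
  nlinarith [mul_pos h₁ h₂]

end Ordered

lemma exists_mem_Ioo_eq_zero_of_mul_neg {α : Type*} [ConditionallyCompleteLinearOrder α]
    [TopologicalSpace α] [OrderTopology α] [DenselyOrdered α] {f : α → ℝ} {u w : α}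
    (huw : u ≤ w) (hf : ContinuousOn f (Set.Icc u w)) (h : f u * f w < 0) :
    ∃ x ∈ Set.Ioo u w, f x = 0 := by
  rcases mul_neg_iff.mp h with ⟨hu, hw⟩ | ⟨hu, hw⟩
  · exact intermediate_value_Ioo' huw hf ⟨hw, hu⟩
  · exact intermediate_value_Ioo huw hf ⟨hu, hw⟩

lemma Fin.eq_of_mem_Ioo_castSucc_succ {α : Type*} [Preorder α] {d : ℕ} {a : Fin (d + 1) → α}
    (ha : Monotone a) {y : α} {i j : Fin d} (hi : y ∈ Set.Ioo (a i.castSucc) (a i.succ))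
    (hj : y ∈ Set.Ioo (a j.castSucc) (a j.succ)) : i = j := by
  by_contra hij
  rcases Ne.lt_or_gt hij with h | h
  · exact lt_asymm (hi.2.trans_le (ha (Fin.succ_le_castSucc_iff.mpr h))) hj.1
  · exact lt_asymm (hj.2.trans_le (ha (Fin.succ_le_castSucc_iff.mpr h))) hi.1

lemma exists_interlacing_eq_C_leadingCoeff_mul_nodal {d : ℕ} {a : Fin (d + 1) → ℝ}
    (ha : StrictMono a) {p : ℝ[X]} (hp : p.degree = d)
    (hsign : ∀ k : Fin (d + 1), 0 < (-1) ^ (d - k : ℕ) * p.eval (a k)) :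
    ∃ x : Fin d → ℝ, (∀ i, x i ∈ Set.Ioo (a i.castSucc) (a i.succ)) ∧
      p = C p.leadingCoeff * nodal univ x := by
  have hroot (i : Fin d) : ∃ x ∈ Set.Ioo (a i.castSucc) (a i.succ), p.eval x = 0 :=
    exists_mem_Ioo_eq_zero_of_mul_neg (ha i.castSucc_lt_succ).le
      p.continuous.continuousOn (mul_neg_of_neg_one_pow_mul_pos hsign i)
  choose x hxI hx0 using hroot
  have hxinj : Set.InjOn x (univ : Finset (Fin d)) := fun i _ j _ hij =>
    Fin.eq_of_mem_Ioo_castSucc_succ ha.monotone (hxI i) (hij ▸ hxI j)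
  exact ⟨x, hxI, eq_C_leadingCoeff_mul_nodal hxinj
    (by rw [hp, card_univ, Fintype.card_fin]) fun i _ => hx0 i⟩

/-- for a₀ < ⋯ < a_d real and positive weights e₀, …, e_d, the polynomial
q(X) = Σᵢ eᵢ ∏_{j≠i} (X − aⱼ) has degree d, all its complex roots are real and simple, and
there is exactly one root in each interval (aᵢ, aᵢ₊₁), these accounting for all roots. -/
theorem stmt_9 (d : ℕ) (a : Fin (d + 1) → ℝ) (ha : StrictMono a)
    (e : Fin (d + 1) → ℝ) (he : ∀ i, 0 < e i) :
    let q : Polynomial ℝ := ∑ i, Polynomial.C (e i) *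
        ∏ j ∈ Finset.univ.erase i, (Polynomial.X - Polynomial.C (a j));
    q.degree = d ∧
    (∀ z : ℂ, Polynomial.aeval z q = 0 →
      z.im = 0 ∧ Polynomial.aeval z (Polynomial.derivative q) ≠ 0) ∧
    (∀ i : Fin d, ∃! x : ℝ,
      x ∈ Set.Ioo (a i.castSucc) (a i.succ) ∧ Polynomial.eval x q = 0) ∧
    (∀ x : ℝ, Polynomial.eval x q = 0 →
      ∃ i : Fin d, x ∈ Set.Ioo (a i.castSucc) (a i.succ)) := by
  intro q
  have hq : q = ∑ i, C (e i) * nodal (univ.erase i) a := rfl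
  have hdeg : q.degree = d :=
    degree_sum_C_mul_nodal_erase (Fintype.card_fin _) a e
      (sum_pos (fun i _ => he i) univ_nonempty).ne'
  have hsign (k : Fin (d + 1)) : 0 < (-1) ^ (d - k : ℕ) * q.eval (a k) := by
    rw [hq, eval_sum_C_mul_nodal_erase_self, mul_left_comm]
    exact mul_pos (he k) (neg_one_pow_mul_eval_nodal_erase_pos ha k)
  obtain ⟨x, hxI, hfac⟩ := exists_interlacing_eq_C_leadingCoeff_mul_nodal ha hdeg hsign
  have hxinj : Set.InjOn x (univ : Finset (Fin d)) := fun i _ j _ hij =>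
    Fin.eq_of_mem_Ioo_castSucc_succ ha.monotone (hxI i) (hij ▸ hxI j)
  have hlc : q.leadingCoeff ≠ 0 :=
    leadingCoeff_ne_zero.mpr (ne_zero_of_coe_le_degree hdeg.ge)
  have hzeros {L : Type} [CommRing L] [IsDomain L] [Algebra ℝ L] (z : L) :
      aeval z q = 0 ↔ ∃ i, z = algebraMap ℝ L (x i) := by
    rw [hfac, aeval_C_mul_nodal_eq_zero_iff hlc]; simp only [mem_univ, true_and]
  have hreal (y : ℝ) : q.eval y = 0 ↔ ∃ i, y = x i := by
    simpa using hzeros y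
  refine ⟨hdeg, fun z hz => ⟨?_, ?_⟩, fun i => ⟨x i, ⟨hxI i, (hreal _).mpr ⟨i, rfl⟩⟩, ?_⟩,
    fun y hy => ?_⟩
  · obtain ⟨i, rfl⟩ := (hzeros z).mp hz
    exact Complex.ofReal_im _
  · have hsep : q.Separable := by
      rw [hfac]; exact separable_C_mul_nodal hlc hxinj
    exact hsep.aeval_derivative_ne_zero hz
  · rintro y ⟨hyI, hy⟩
    obtain ⟨j, rfl⟩ := (hreal y).mp hy
    rw [Fin.eq_of_mem_Ioo_castSucc_succ ha.monotone hyI (hxI j)]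
  · obtain ⟨j, rfl⟩ := (hreal y).mp hy
    exact ⟨j, hxI j⟩
end

section
/- For every squarefree integer D ≥ 2 there exist positive rational numbers E_d and E_e and a positive rational number r such that 4·E_d² + 4·E_d·E_e + 4·E_e² + 12·E_d + 12·E_e + 9 = D·r². (In particular, one may choose a rational s with D·s² ∈ (1/3, 4/9) and take E_d = 1/(6·D·s² − 2) and E_e = (4 − 9·D·s²)/(6·D·s² − 2).) -/
/-! Choose a rational `s` with `t = D s² ∈ (1/3, 4/9)`, which is possible since squares of
rationals are dense in the positive reals. With `u = 6t - 2 > 0`, the energies `E_d = 1/u`,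
`E_e = (4 - 9t)/u` are positive and turn the discriminant into `36 t / u² = D (6s/u)²`. -/

theorem exists_rat_pos_mul_sq_mem_Ioo {D a b : ℚ} (hD : 0 < D) (ha : 0 ≤ a) (hab : a < b) :
    ∃ s : ℚ, 0 < s ∧ a < D * s ^ 2 ∧ D * s ^ 2 < b := by
  have hD' : (0 : ℝ) < D := by exact_mod_cast hD
  have hab' : ((a : ℝ) / D) < b / D := div_lt_div_of_pos_right (by exact_mod_cast hab) hD'
  obtain ⟨s, hs_low, hs_high⟩ :=
    exists_rat_btwn (Real.sqrt_lt_sqrt (by positivity) hab')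
  have hs : (0 : ℝ) < s := (Real.sqrt_nonneg _).trans_lt hs_low
  have h_low : (a : ℝ) < D * (s : ℝ) ^ 2 := by
    rw [← div_lt_iff₀' hD']
    exact (Real.sqrt_lt' hs).mp hs_low
  have h_high : D * (s : ℝ) ^ 2 < b := by
    rw [← lt_div_iff₀' hD']
    exact (Real.lt_sqrt hs.le).mp hs_high
  exact ⟨s, by exact_mod_cast hs, by exact_mod_cast h_low, by exact_mod_cast h_high⟩

theorem discriminant_eq_mul_sq {K : Type*} [Field K] {D s u : K}
    (hu_def : u = 6 * (D * s ^ 2) - 2) (hu : u ≠ 0) :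
    let Ed := 1 / u
    let Ee := (4 - 9 * (D * s ^ 2)) / u
    4 * Ed ^ 2 + 4 * Ed * Ee + 4 * Ee ^ 2 + 12 * Ed + 12 * Ee + 9 = D * (6 * s / u) ^ 2 := by
  field_simp
  rw [hu_def]
  ring

theorem stmt_11_general (D : ℤ) (hD : 2 ≤ D) :
    ∃ Ed Ee r : ℚ, 0 < Ed ∧ 0 < Ee ∧ 0 < r ∧
      4 * Ed ^ 2 + 4 * Ed * Ee + 4 * Ee ^ 2 + 12 * Ed + 12 * Ee + 9 = (D : ℚ) * r ^ 2 := by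
  have hD' : (0 : ℚ) < D := by exact_mod_cast (by omega : (0 : ℤ) < D)
  obtain ⟨s, hs, h_low, h_high⟩ :=
    exists_rat_pos_mul_sq_mem_Ioo hD' (by norm_num : (0 : ℚ) ≤ 1 / 3)
      (by norm_num : (1 / 3 : ℚ) < 4 / 9)
  have hu : 0 < 6 * (D * s ^ 2) - 2 := by linarith
  have hEe : 0 < 4 - 9 * (D * s ^ 2) := by linarith
  exact ⟨_, _, _, by positivity, by positivity, by positivity, discriminant_eq_mul_sq rfl hu.ne'⟩

/-- for every squarefree integer D ≥ 2 there are positive rationals E_d, E_e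
and a positive rational r with 4E_d² + 4E_dE_e + 4E_e² + 12E_d + 12E_e + 9 = D·r². -/
theorem stmt_11 (D : ℤ) (hD : 2 ≤ D) (hsf : Squarefree D) :
    ∃ Ed Ee r : ℚ, 0 < Ed ∧ 0 < Ee ∧ 0 < r ∧
      4 * Ed ^ 2 + 4 * Ed * Ee + 4 * Ee ^ 2 + 12 * Ed + 12 * Ee + 9 = (D : ℚ) * r ^ 2 :=
  stmt_11_general D hD
end

section
/- Let G be a finite connected simple graph with boundary B and injective boundary values u : B → ℝ as in the context, and let σ be an orientation of G compatible with u. Then there exists a function h : V → ℝ with h = u on B and h(x) > h(y) for every edge directed from x to y by σ; that is, the set F_u(σ) is nonempty. -/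
attribute [local instance] Classical.propDecidable

variable {V : Type*} [Fintype V] [DecidableEq V]

/-!
Let `U x` be the least boundary value among the boundary vertices from which `x` is reachable
along `σ`, and `L x` the greatest among those reachable from `x`; both exist because no interior
vertex is a source or a sink. Along an edge `x → y` both envelopes decrease, and compatibility
gives `L y < U x`. Interpolating `h = (1 - t) U + t L` with a rank `t ∈ [0, 1]` that strictly
increases along `σ` therefore makes `h` strictly decreasing along edges, and `U = L = u` on `B`.
-/

open Relation

section Reachability

variable {α : Type*} [Finite α] {r : α → α → Prop} {B : Set α}

theorem exists_mem_reflTransGen_of_forall_notMem (hacyc : ∀ x, ¬ TransGen r x x)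
    (hsrc : ∀ x ∉ B, ∃ y, r y x) (x : α) : ∃ a ∈ B, ReflTransGen r a x := by
  have : Std.Irrefl (TransGen r) := ⟨hacyc⟩
  induction x using (Finite.wellFounded_of_trans_of_irrefl (TransGen r)).induction with
  | _ x ih =>
    by_cases hx : x ∈ B
    · exact ⟨x, hx, .refl⟩
    · obtain ⟨y, hyx⟩ := hsrc x hx
      obtain ⟨a, haB, hay⟩ := ih y (.single hyx)
      exact ⟨a, haB, hay.tail hyx⟩

theorem exists_reflTransGen_mem_of_forall_notMem (hacyc : ∀ x, ¬ TransGen r x x)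
    (hsnk : ∀ x ∉ B, ∃ y, r x y) (x : α) : ∃ b ∈ B, ReflTransGen r x b := by
  simpa only [Function.swap, reflTransGen_swap] using
    exists_mem_reflTransGen_of_forall_notMem (r := Function.swap r)
      (fun x => by rw [transGen_swap]; exact hacyc x) hsnk x

theorem exists_rank_mem_Icc (hacyc : ∀ x, ¬ TransGen r x x) :
    ∃ t : α → ℝ, (∀ x, t x ∈ Set.Icc 0 1) ∧ ∀ x y, r x y → t x < t y := by
  let k : α → ℕ := fun x => {z | TransGen r z x}.ncard
  refine ⟨fun x => k x / Nat.card α, fun x => ⟨by positivity, ?_⟩, fun x y hxy => ?_⟩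
  · exact div_le_one_of_le₀ (by exact_mod_cast Set.ncard_le_card _) (by positivity)
  · have hk : k x < k y := Set.ncard_lt_ncard <|
      Set.ssubset_iff_of_subset (fun z hz => TransGen.tail hz hxy) |>.mpr
        ⟨x, TransGen.single hxy, hacyc x⟩
    have : (0 : ℝ) < Nat.card α := by
      have : Nonempty α := ⟨x⟩
      exact_mod_cast Nat.card_pos
    exact div_lt_div_of_pos_right (by exact_mod_cast hk) this

end Reachability

theorem sub_mul_add_mul_lt_sub_mul_add_mul {U L U' L' s t : ℝ} (hs : 0 ≤ s) (hst : s < t)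
    (ht : t ≤ 1) (hU : U' ≤ U) (hL : L' ≤ L) (hLU : L' < U) :
    (1 - t) * U' + t * L' < (1 - s) * U + s * L := by
  nlinarith [mul_nonneg (sub_nonneg.mpr ht) (sub_nonneg.mpr hU),
    mul_nonneg hs (sub_nonneg.mpr hL), mul_pos (sub_pos.mpr hst) (sub_pos.mpr hLU)]

theorem stmt_12_general (G : SimpleGraph V) (B : Set V) (u : V → ℝ)
    (σ : GraphOrientation G) (hσ : Compatible G B u σ) :
    ∃ h : V → ℝ, h ∈ FuSigma G B u σ := by
  obtain ⟨hacyc, hint, hbdry⟩ := hσ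
  have hle : ∀ a ∈ B, ∀ b ∈ B, ReflTransGen σ.dir a b → u b ≤ u a := fun a ha b hb hab =>
    (reflTransGen_iff_eq_or_transGen.mp hab).elim (fun h => h ▸ le_rfl)
      fun h => (hbdry a ha b hb h).le
  choose a ha haU using fun x => Set.exists_min_image {a | a ∈ B ∧ ReflTransGen σ.dir a x}
    u (Set.toFinite _)
      (exists_mem_reflTransGen_of_forall_notMem hacyc (fun x hx => (hint x hx).2) x)
  choose b hb hbL using fun x => Set.exists_max_image {b | b ∈ B ∧ ReflTransGen σ.dir x b}
    u (Set.toFinite _)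
      (exists_reflTransGen_mem_of_forall_notMem hacyc (fun x hx => (hint x hx).1) x)
  obtain ⟨t, ht, ht_lt⟩ := exists_rank_mem_Icc hacyc
  refine ⟨fun x => (1 - t x) * u (a x) + t x * u (b x), fun x hx => ?_, fun x y hxy => ?_⟩
  · have hax : u (a x) = u x :=
      le_antisymm (haU x x ⟨hx, .refl⟩) (hle _ (ha x).1 x hx (ha x).2)
    have hbx : u (b x) = u x :=
      le_antisymm (hle x hx _ (hb x).1 (hb x).2) (hbL x x ⟨hx, .refl⟩)
    simp only [hax, hbx]
    ring
  · have hU : u (a y) ≤ u (a x) := haU y (a x) ⟨(ha x).1, (ha x).2.tail hxy⟩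
    have hL : u (b y) ≤ u (b x) := hbL x (b y) ⟨(hb y).1, (hb y).2.head hxy⟩
    have hLU : u (b y) < u (a x) := hbdry _ (ha x).1 _ (hb y).1
      ((TransGen.tail' (ha x).2 hxy).trans_left (hb y).2)
    exact sub_mul_add_mul_lt_sub_mul_add_mul (ht x).1 (ht_lt x y hxy) (ht y).2 hU hL hLU

/-- for every orientation σ compatible with u the polytope F_u(σ) is nonempty. -/
theorem stmt_12 (G : SimpleGraph V) (hconn : G.Connected)
    (B : Set V) (hB : BoundaryOK G B) (u : V → ℝ) (hu : Set.InjOn u B)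
    (σ : GraphOrientation G) (hσ : Compatible G B u σ) :
    ∃ h : V → ℝ, h ∈ FuSigma G B u σ :=
  stmt_12_general G B u σ hσ
end

section
/- Let G be a finite connected simple graph with boundary B as in the context, and let σ be an acyclic orientation of G such that no interior vertex is a source or a sink of σ. Then there exists a function ω assigning a positive real number to each edge of G such that at every interior vertex x the flow is conserved: the sum of ω over the edges directed into x by σ equals the sum of ω over the edges directed out of x by σ. -/
attribute [local instance] Classical.propDecidable

variable {V : Type*} [Fintype V] [DecidableEq V]

/-!
Every edge lies on a σ-directed walk joining two boundary vertices: acyclicity makes σ well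
founded in both directions, so following σ forwards and backwards from the edge terminates, and
it can only terminate at the boundary because interior vertices are neither sinks nor sources.
A directed walk enters each interior vertex as often as it leaves it, so the number of times it
traverses each edge is a nonnegative conserved flow. Summing these flows over all edges gives a
conserved flow that is positive on every edge.
-/

theorem List.sum_count_eq_countP_mem {α : Type*} [DecidableEq α] (l : List α) (s : Finset α) :
    ∑ a ∈ s, l.count a = l.countP (· ∈ s) := by
  induction l with
  | nil => simp
  | cons b l ih => simp [List.count_cons, Finset.sum_add_distrib, ih, List.countP_cons]

theorem wellFounded_of_forall_not_transGen_self {α : Type*} [Finite α] {r : α → α → Prop}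
    (h : ∀ x, ¬ Relation.TransGen r x x) : WellFounded r :=
  haveI : IsTrans α (Relation.TransGen r) := ⟨fun _ _ _ => Relation.TransGen.trans⟩
  haveI : Std.Irrefl (Relation.TransGen r) := ⟨h⟩
  Subrelation.wf Relation.TransGen.single (Finite.wellFounded_of_trans_of_irrefl _)

namespace GraphOrientation

variable {α : Type*} {G : SimpleGraph α} (σ : GraphOrientation G) (B : Set α)

theorem dir_asymm {x y : α} (h : σ.dir x y) : ¬ σ.dir y x :=
  (σ.dir_total x y (σ.dir_adj x y h)).mp h

def IsDirectedWalk {a b : α} (p : G.Walk a b) : Prop :=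
  ∀ d ∈ p.darts, σ.dir d.fst d.snd

theorem exists_isDirectedWalk_to_mem [Finite α] (hacyc : ∀ x, ¬ Relation.TransGen σ.dir x x)
    (hout : ∀ x, x ∉ B → ∃ y, σ.dir x y) (v : α) :
    ∃ b ∈ B, ∃ p : G.Walk v b, σ.IsDirectedWalk p := by
  have hwf : WellFounded (flip σ.dir) := wellFounded_of_forall_not_transGen_self fun x hx =>
    hacyc x (Relation.transGen_swap.mp hx)
  induction v using hwf.induction with
  | _ v ih =>
    by_cases hv : v ∈ B
    · exact ⟨v, hv, .nil, by simp [IsDirectedWalk]⟩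
    obtain ⟨y, hy⟩ := hout v hv
    obtain ⟨b, hb, p, hp⟩ := ih y hy
    exact ⟨b, hb, .cons (σ.dir_adj v y hy) p, by simpa [IsDirectedWalk, hy] using hp⟩

theorem exists_isDirectedWalk_from_mem [Finite α] (hacyc : ∀ x, ¬ Relation.TransGen σ.dir x x)
    (hin : ∀ x, x ∉ B → ∃ y, σ.dir y x) (v : α) :
    ∃ a ∈ B, ∃ p : G.Walk a v, σ.IsDirectedWalk p := by
  induction v using (wellFounded_of_forall_not_transGen_self hacyc).induction with
  | _ v ih =>
    by_cases hv : v ∈ B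
    · exact ⟨v, hv, .nil, by simp [IsDirectedWalk]⟩
    obtain ⟨y, hy⟩ := hin v hv
    obtain ⟨a, ha, p, hp⟩ := ih y hy
    refine ⟨a, ha, p.concat (σ.dir_adj y v hy), ?_⟩
    simpa [IsDirectedWalk, SimpleGraph.Walk.darts_concat, or_imp, forall_and, hy] using hp

theorem exists_isDirectedWalk_mem_edges [Finite α] (hacyc : ∀ x, ¬ Relation.TransGen σ.dir x x)
    (hnss : ∀ x, x ∉ B → (∃ y, σ.dir x y) ∧ (∃ y, σ.dir y x)) {e : Sym2 α}
    (he : e ∈ G.edgeSet) :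
    ∃ a ∈ B, ∃ b ∈ B, ∃ p : G.Walk a b, σ.IsDirectedWalk p ∧ e ∈ p.edges := by
  induction e using Sym2.inductionOn with
  | _ u v =>
  rw [SimpleGraph.mem_edgeSet] at he
  wlog huv : σ.dir u v generalizing u v
  · rw [Sym2.eq_swap]
    exact this v u he.symm ((σ.dir_total u v he).not_left.mp huv)
  obtain ⟨a, ha, p, hp⟩ :=
    σ.exists_isDirectedWalk_from_mem B hacyc (fun x hx => (hnss x hx).2) u
  obtain ⟨b, hb, q, hq⟩ :=
    σ.exists_isDirectedWalk_to_mem B hacyc (fun x hx => (hnss x hx).1) v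
  refine ⟨a, ha, b, hb, (p.concat he).append q, ?_, by simp [SimpleGraph.Walk.edges_concat]⟩
  simp only [IsDirectedWalk, SimpleGraph.Walk.darts_append, SimpleGraph.Walk.darts_concat,
    List.mem_append, List.concat_eq_append, List.mem_singleton] at hp hq ⊢
  rintro d ((hd | rfl) | hd)
  exacts [hp d hd, huv, hq d hd]

section Flow

variable [Fintype α]

noncomputable def inNbrs (x : α) : Finset α := (G.neighborFinset x).filter (fun y => σ.dir y x)

noncomputable def outNbrs (x : α) : Finset α := (G.neighborFinset x).filter (fun y => σ.dir x y)

def ConservesFlow (ω : Sym2 α → ℝ) : Prop :=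
  ∀ x, x ∉ B → ∑ y ∈ σ.inNbrs x, ω s(x, y) = ∑ y ∈ σ.outNbrs x, ω s(x, y)

variable {σ B}

theorem conservesFlow_sum {ι : Type*} {s : Finset ι} {ω : ι → Sym2 α → ℝ}
    (h : ∀ i ∈ s, σ.ConservesFlow B (ω i)) : σ.ConservesFlow B (∑ i ∈ s, ω i) := by
  intro x hx
  simp only [Finset.sum_apply]
  rw [Finset.sum_comm, Finset.sum_congr rfl fun i hi => h i hi x hx, Finset.sum_comm]

theorem exists_conservesFlow_pos_of_forall_edge
    (h : ∀ e ∈ G.edgeSet, ∃ ω, σ.ConservesFlow B ω ∧ 0 ≤ ω ∧ 0 < ω e) :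
    ∃ ω, (∀ e ∈ G.edgeSet, 0 < ω e) ∧ σ.ConservesFlow B ω := by
  choose! ω hflow hnonneg hpos using h
  refine ⟨∑ e ∈ G.edgeFinset, ω e, fun e he => ?_,
    conservesFlow_sum fun e he => hflow e (G.mem_edgeFinset.mp he)⟩
  rw [Finset.sum_apply]
  exact (hpos e he).trans_le <| Finset.single_le_sum
    (fun e' he' => hnonneg e' (G.mem_edgeFinset.mp he') e) (G.mem_edgeFinset.mpr he)

variable [DecidableEq α] {a b : α} {p : G.Walk a b}

theorem IsDirectedWalk.sum_count_edges_inNbrs (hp : σ.IsDirectedWalk p) (x : α) :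
    ∑ y ∈ σ.inNbrs x, p.edges.count s(x, y) = p.support.tail.count x := by
  have hdart : ∀ d ∈ p.darts, d.edge ∈ (σ.inNbrs x).image (s(x, ·)) ↔ d.snd = x := by
    rintro ⟨⟨u, v⟩, huv⟩ hd
    have huv' : σ.dir u v := hp _ hd
    simp only [inNbrs, Finset.mem_image, Finset.mem_filter, SimpleGraph.mem_neighborFinset,
      SimpleGraph.Dart.edge_mk, Sym2.eq_iff]
    constructor
    · rintro ⟨y, ⟨-, hyx⟩, ⟨rfl, rfl⟩ | ⟨rfl, rfl⟩⟩
      · exact absurd huv' (σ.dir_asymm hyx)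
      · rfl
    · rintro rfl
      exact ⟨u, ⟨huv.symm, huv'⟩, Or.inr ⟨rfl, rfl⟩⟩
  rw [← Finset.sum_image (f := p.edges.count) (fun y _ z _ => Sym2.congr_right.mp),
    List.sum_count_eq_countP_mem, SimpleGraph.Walk.edges, List.countP_map,
    ← SimpleGraph.Walk.map_snd_darts, List.count, List.countP_map]
  exact List.countP_congr fun d hd => by simpa using hdart d hd

theorem IsDirectedWalk.sum_count_edges_outNbrs (hp : σ.IsDirectedWalk p) (x : α) :
    ∑ y ∈ σ.outNbrs x, p.edges.count s(x, y) = p.support.dropLast.count x := by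
  have hdart : ∀ d ∈ p.darts, d.edge ∈ (σ.outNbrs x).image (s(x, ·)) ↔ d.fst = x := by
    rintro ⟨⟨u, v⟩, huv⟩ hd
    have huv' : σ.dir u v := hp _ hd
    simp only [outNbrs, Finset.mem_image, Finset.mem_filter, SimpleGraph.mem_neighborFinset,
      SimpleGraph.Dart.edge_mk, Sym2.eq_iff]
    constructor
    · rintro ⟨y, ⟨-, hxy⟩, ⟨rfl, rfl⟩ | ⟨rfl, rfl⟩⟩
      · rfl
      · exact absurd huv' (σ.dir_asymm hxy)
    · rintro rfl
      exact ⟨v, ⟨huv, huv'⟩, Or.inl ⟨rfl, rfl⟩⟩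
  rw [← Finset.sum_image (f := p.edges.count) (fun y _ z _ => Sym2.congr_right.mp),
    List.sum_count_eq_countP_mem, SimpleGraph.Walk.edges, List.countP_map,
    ← SimpleGraph.Walk.map_fst_darts, List.count, List.countP_map]
  exact List.countP_congr fun d hd => by simpa using hdart d hd

theorem IsDirectedWalk.conservesFlow_count_edges (hp : σ.IsDirectedWalk p) (ha : a ∈ B)
    (hb : b ∈ B) : σ.ConservesFlow B fun e => (p.edges.count e : ℝ) := by
  intro x hx
  have hxa : x ≠ a := fun h => hx (h ▸ ha)
  have hxb : x ≠ b := fun h => hx (h ▸ hb)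
  have hin : p.support.tail.count x = p.support.count x := by
    rw [← p.cons_tail_support, List.count_cons_of_ne hxa.symm, List.tail_cons]
  have hout : p.support.dropLast.count x = p.support.count x := by
    rw [← p.map_fst_darts_append, List.count_append, p.map_fst_darts]
    simp [hxb.symm]
  have hcount : ∑ y ∈ σ.inNbrs x, p.edges.count s(x, y) =
      ∑ y ∈ σ.outNbrs x, p.edges.count s(x, y) := by
    rw [hp.sum_count_edges_inNbrs, hp.sum_count_edges_outNbrs, hin, hout]
  dsimp only
  exact_mod_cast hcount

theorem exists_conservesFlow_nonneg_pos (hacyc : ∀ x, ¬ Relation.TransGen σ.dir x x)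
    (hnss : ∀ x, x ∉ B → (∃ y, σ.dir x y) ∧ (∃ y, σ.dir y x)) {e : Sym2 α}
    (he : e ∈ G.edgeSet) : ∃ ω, σ.ConservesFlow B ω ∧ 0 ≤ ω ∧ 0 < ω e := by
  obtain ⟨a, ha, b, hb, p, hp, hep⟩ := σ.exists_isDirectedWalk_mem_edges B hacyc hnss he
  exact ⟨fun e => (p.edges.count e : ℝ), hp.conservesFlow_count_edges ha hb,
    fun _ => Nat.cast_nonneg _, Nat.cast_pos.mpr (List.count_pos_iff.mpr hep)⟩

end Flow

end GraphOrientation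

theorem stmt_13_general (G : SimpleGraph V)
    (B : Set V)
    (σ : GraphOrientation G) (hacyc : ∀ x, ¬ Relation.TransGen σ.dir x x)
    (hnosinksource : ∀ x, x ∉ B → (∃ y, σ.dir x y) ∧ (∃ y, σ.dir y x)) :
    ∃ ω : Sym2 V → ℝ, (∀ e ∈ G.edgeSet, 0 < ω e) ∧
      ∀ x, x ∉ B →
        ∑ y ∈ (G.neighborFinset x).filter (fun y => σ.dir y x), ω s(x, y) =
        ∑ y ∈ (G.neighborFinset x).filter (fun y => σ.dir x y), ω s(x, y) :=
  GraphOrientation.exists_conservesFlow_pos_of_forall_edge fun _ he =>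
    GraphOrientation.exists_conservesFlow_nonneg_pos hacyc hnosinksource he

/-- an acyclic orientation with no interior sources or sinks carries a strictly
positive flow conserved at every interior vertex. -/
theorem stmt_13 (G : SimpleGraph V) (hconn : G.Connected)
    (B : Set V) (hB : BoundaryOK G B)
    (σ : GraphOrientation G) (hacyc : ∀ x, ¬ Relation.TransGen σ.dir x x)
    (hnosinksource : ∀ x, x ∉ B → (∃ y, σ.dir x y) ∧ (∃ y, σ.dir y x)) :
    ∃ ω : Sym2 V → ℝ, (∀ e ∈ G.edgeSet, 0 < ω e) ∧
      ∀ x, x ∉ B →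
        ∑ y ∈ (G.neighborFinset x).filter (fun y => σ.dir y x), ω s(x, y) =
        ∑ y ∈ (G.neighborFinset x).filter (fun y => σ.dir x y), ω s(x, y) :=
  stmt_13_general G B σ hacyc hnosinksource
end
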